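/- arXiv:2405.05014 — 4 statements merged into one kernel-verified Lean document; each statement's English description precedes it below -/
import Mathlib

section
/- Let Σ be a unimodular fan in N_ℝ. The pairing A^k(Σ) ⊗ MW_k(Σ) → ℤ sending x_σ ⊗ w to w(σ) for each σ ∈ Σ_k is well-defined and induces an isomorphism MW_k(Σ) ≅ Hom(A^k(Σ), ℤ). -/
/-!
Every balanced weight `v` on the cones of all dimensions pairs with the polynomial ring: send `x^a`
to the weight at the origin of the iterated intersection product `x^a · v`, built from the
operators `v ↦ x_ρ · v`. On a unimodular fan these operators preserve balancing and commute on
balanced weights (both facts reduce to the symmetry of a double sum over pairs of rays adjacent to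
a cone), so the pairing is well defined on monomials. It kills `I` because `x^a · v` is supported
on the star of the support of `a`, and `J` because a balanced weight sums to zero against every
`m ∈ M` at the origin. Hence each Minkowski weight `w` gives a functional on `A^k` with
`x_σ ↦ w(σ)`. Conversely a functional on `A^k` yields a Minkowski weight since `ℓ_m · x_τ = 0` for
`m` vanishing on `τ`, and the two constructions are inverse because `A^k` is spanned by the `x_σ`.
-/

open scoped DirectSum NNReal

abbrev NZ (n : ℕ) := Fin n → ℤ
abbrev NR (n : ℕ) := Fin n → ℝ

/-- The canonical map from the lattice `ℤⁿ` into `ℝⁿ`. -/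
def latt {n : ℕ} (v : NZ n) : NR n := fun j => (v j : ℝ)

/-- A unimodular (rational, simplicial) fan, encoded combinatorially:
rays are indexed by `R` with primitive generators `e r` in the lattice `ℤⁿ`,
and cones correspond to those finite sets of rays belonging to `faces`. -/
structure UFan (n : ℕ) where
  R : Type
  fintypeR : Fintype R
  deceqR : DecidableEq R
  e : R → NZ n
  faces : Finset (Finset R)
  empty_mem : ∅ ∈ faces
  down_closed : ∀ S ∈ faces, ∀ T ⊆ S, T ∈ faces
  /-- the primitive generators of the rays of every cone extend to a
  `ℤ`-basis of the lattice -/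
  unimodular : ∀ S ∈ faces, ∃ b : Module.Basis (Fin n) ℤ (NZ n), ∃ f : {r // r ∈ S} → Fin n,
      Function.Injective f ∧ ∀ r : {r // r ∈ S}, b (f r) = e r
  /-- the geometric cones of the family intersect along common faces -/
  isFan : ∀ S ∈ faces, ∀ T ∈ faces,
      (Submodule.span ℝ≥0 (latt '' (e '' (S : Set R))) ⊓
        Submodule.span ℝ≥0 (latt '' (e '' (T : Set R))))
        = Submodule.span ℝ≥0 (latt '' (e '' ((S ∩ T : Finset R) : Set R)))

attribute [instance] UFan.fintypeR UFan.deceqR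

namespace UFan

variable {n : ℕ} (Φ : UFan n)

/-- The sublattice `N_σ` generated by the rays of a cone `σ`. -/
def Nsub (S : Finset Φ.R) : Submodule ℤ (NZ n) :=
  Submodule.span ℤ (Φ.e '' (S : Set Φ.R))

/-- The quotient lattice `N^τ = N / N_τ`. -/
abbrev Q (T : Finset Φ.R) := NZ n ⧸ Φ.Nsub T

/-- The projection `N → N^τ`. -/
def qmap (T : Finset Φ.R) : NZ n →ₗ[ℤ] Φ.Q T := (Φ.Nsub T).mkQ

lemma Nsub_mono {T T' : Finset Φ.R} (h : T ⊆ T') : Φ.Nsub T ≤ Φ.Nsub T' :=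
  Submodule.span_mono (Set.image_mono (Finset.coe_subset.2 h))

/-- The projection `N^τ → N^τ'` for `τ ⊆ τ'`. -/
def proj {T T' : Finset Φ.R} (h : T ⊆ T') : Φ.Q T →ₗ[ℤ] Φ.Q T' :=
  Submodule.mapQ _ _ LinearMap.id
    (by simpa using Φ.Nsub_mono h)

/-- The map on exterior algebras induced by the projection `N^τ → N^τ'`. -/
def emap {T T' : Finset Φ.R} (h : T ⊆ T') :
    ExteriorAlgebra ℤ (Φ.Q T) →ₗ[ℤ] ExteriorAlgebra ℤ (Φ.Q T') :=
  (ExteriorAlgebra.map (Φ.proj h)).toLinearMap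

/-- The multi-tangent space `F_p(□_σ^τ)`: the sum over cones `η ⊇ σ` of the
images of `⋀^p N_η` inside the exterior algebra of `N^τ`. -/
def Fmod (p : ℕ) (T S : Finset Φ.R) : Submodule ℤ (ExteriorAlgebra ℤ (Φ.Q T)) :=
  ⨆ (S' : Finset Φ.R) (_ : S' ∈ Φ.faces) (_ : S ⊆ S'),
    Submodule.map (ExteriorAlgebra.map ((Φ.qmap T).comp (Φ.Nsub S').subtype)).toLinearMap
      (⋀[ℤ]^p ↥(Φ.Nsub S'))

/-- Faces `□_σ^τ` of dimension `q` of the canonical compactification, encoded as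
pairs `(τ, σ)` of cones with `τ ⊆ σ` and `dim σ - dim τ = q`. -/
def FaceIdx (q : ℕ) :=
  {TS : Finset Φ.R × Finset Φ.R //
    TS.1 ⊆ TS.2 ∧ TS.2 ∈ Φ.faces ∧ TS.2.card = TS.1.card + q}

instance (q : ℕ) : Fintype (Φ.FaceIdx q) := by
  unfold FaceIdx; infer_instance

instance (q : ℕ) : DecidableEq (Φ.FaceIdx q) := by
  unfold FaceIdx; infer_instance

/-- `γ` is a codimension-one face of `δ` in the canonical compactification. -/
def Adj {q : ℕ} (γ : Φ.FaceIdx q) (δ : Φ.FaceIdx (q + 1)) : Prop :=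
  δ.1.1 ⊆ γ.1.1 ∧ γ.1.2 ⊆ δ.1.2

instance {q : ℕ} (γ : Φ.FaceIdx q) (δ : Φ.FaceIdx (q + 1)) : Decidable (Φ.Adj γ δ) := by
  unfold Adj; infer_instance

/-- The cellular chain group `C_{p,q}` of the canonical compactification. -/
abbrev Cch (p q : ℕ) := ⨁ δ : Φ.FaceIdx q, ↥(Φ.Fmod p δ.1.1 δ.1.2)

end UFan

/-- Auxiliary data for the tropical (co)chain complexes of the canonical
compactification: a system of incidence signs coming from a choice of cellular
orientation, together with the component maps `F_p(δ) → F_p(γ)` (projection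
followed by inclusion), characterized inside the ambient exterior algebras. -/
structure TropData {n : ℕ} (Φ : UFan n) where
  ε : ∀ q : ℕ, Φ.FaceIdx q → Φ.FaceIdx (q + 1) → ℤ
  ε_unit : ∀ q γ δ, Φ.Adj γ δ → ε q γ δ = 1 ∨ ε q γ δ = -1
  ε_zero : ∀ q γ δ, ¬ Φ.Adj γ δ → ε q γ δ = 0
  ε_rel : ∀ (q : ℕ) (γ : Φ.FaceIdx q) (δ : Φ.FaceIdx (q + 2)),
      (∑ μ : Φ.FaceIdx (q + 1), ε q γ μ * ε (q + 1) μ δ) = 0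
  imap : ∀ (p : ℕ) {q : ℕ} (γ : Φ.FaceIdx q) (δ : Φ.FaceIdx (q + 1)), Φ.Adj γ δ →
      (↥(Φ.Fmod p δ.1.1 δ.1.2) →ₗ[ℤ] ↥(Φ.Fmod p γ.1.1 γ.1.2))
  imap_spec : ∀ (p : ℕ) {q : ℕ} (γ : Φ.FaceIdx q) (δ : Φ.FaceIdx (q + 1)) (h : Φ.Adj γ δ)
      (x : ↥(Φ.Fmod p δ.1.1 δ.1.2)),
      (imap p γ δ h x : ExteriorAlgebra ℤ (Φ.Q γ.1.1)) =
        Φ.emap h.1 (x : ExteriorAlgebra ℤ (Φ.Q δ.1.1))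

namespace UFan

variable {n : ℕ} (Φ : UFan n)

/-- The cellular boundary map `C_{p,q+1} → C_{p,q}`. -/
noncomputable def bdry (td : TropData Φ) (p q : ℕ) :
    Φ.Cch p (q + 1) →ₗ[ℤ] Φ.Cch p q :=
  DirectSum.toModule ℤ _ _ fun δ =>
    ∑ γ : Φ.FaceIdx q,
      if h : Φ.Adj γ δ then
        td.ε q γ δ •
          ((DirectSum.lof ℤ (Φ.FaceIdx q) (fun γ' => ↥(Φ.Fmod p γ'.1.1 γ'.1.2)) γ).comp
            (td.imap p γ δ h))
      else 0

/-- The cellular cochain group `C^{p,q}` of the canonical compactification. -/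
abbrev Cco (p q : ℕ) := Module.Dual ℤ (Φ.Cch p q)

/-- The cellular coboundary map. -/
noncomputable def coder (td : TropData Φ) (p q : ℕ) : Φ.Cco p q →ₗ[ℤ] Φ.Cco p (q + 1) :=
  (Φ.bdry td p q).dualMap

/-- The coboundary arriving in degree `q`. -/
noncomputable def coderFrom (td : TropData Φ) (p : ℕ) :
    ∀ q : ℕ, Φ.Cco p (q - 1) →ₗ[ℤ] Φ.Cco p q
  | 0 => 0
  | (q + 1) => Φ.coder td p q

/-- Tropical cohomology `H^{p,q}` of the canonical compactification. -/
noncomputable def Hcoh (td : TropData Φ) (p q : ℕ) :=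
  ↥(LinearMap.ker (Φ.coder td p q)) ⧸
    Submodule.comap (LinearMap.ker (Φ.coder td p q)).subtype
      (LinearMap.range (Φ.coderFrom td p q))

noncomputable instance (td : TropData Φ) (p q : ℕ) : AddCommGroup (Φ.Hcoh td p q) := by
  unfold Hcoh; infer_instance

/-- The boundary leaving degree `q`. -/
noncomputable def bdryTo (td : TropData Φ) (p : ℕ) :
    ∀ q : ℕ, Φ.Cch p q →ₗ[ℤ] Φ.Cch p (q - 1)
  | 0 => 0
  | (q + 1) => Φ.bdry td p q

instance (p q : ℕ) (M : Submodule ℤ (Φ.Cch p q)) : AddCommGroup M :=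
  @Submodule.addCommGroup ℤ (Φ.Cch p q) _ _ _ M

/-- Tropical homology `H_{p,q}` of the canonical compactification. -/
noncomputable def Hhom (td : TropData Φ) (p q : ℕ) :=
  ↥(LinearMap.ker (Φ.bdryTo td p q)) ⧸
    Submodule.comap (LinearMap.ker (Φ.bdryTo td p q)).subtype
      (LinearMap.range (Φ.bdry td p q))

noncomputable instance (td : TropData Φ) (p q : ℕ) : AddCommGroup (Φ.Hhom td p q) := by
  unfold Hhom; infer_instance

end UFan

namespace UFan

variable {n : ℕ} (Φ : UFan n)

/-- The ideal `I` generated by the monomials `x_{ρ₁} ⋯ x_{ρ_k}` over sets of rays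
not forming a cone of the fan. -/
noncomputable def Iideal : Ideal (MvPolynomial Φ.R ℤ) :=
  Ideal.span {P | ∃ S : Finset Φ.R, S ∉ Φ.faces ∧ P = ∏ r ∈ S, MvPolynomial.X r}

/-- The ideal `J` generated by the linear forms `∑ ρ m(e_ρ) x_ρ`, `m ∈ M = N^*`. -/
noncomputable def Jideal : Ideal (MvPolynomial Φ.R ℤ) :=
  Ideal.span
    {P | ∃ m : Module.Dual ℤ (NZ n), P = ∑ r : Φ.R, m (Φ.e r) • MvPolynomial.X r}

/-- The Chow ring `A^•(Φ) = ℤ[x_ρ : ρ ∈ Φ₁]/(I + J)`. -/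
abbrev Chow := MvPolynomial Φ.R ℤ ⧸ (Φ.Iideal + Φ.Jideal)

/-- The quotient map onto the Chow ring. -/
noncomputable def chowMk : MvPolynomial Φ.R ℤ →ₐ[ℤ] Φ.Chow :=
  Ideal.Quotient.mkₐ ℤ _

/-- The graded piece `A^k(Φ)`: the image of the homogeneous polynomials of degree `k`. -/
noncomputable def ChowGr (k : ℕ) : Submodule ℤ Φ.Chow :=
  Submodule.map (Φ.chowMk).toLinearMap (MvPolynomial.homogeneousSubmodule Φ.R ℤ k)

/-- The cones of dimension `k`. -/
abbrev FacesK (k : ℕ) := {S : Finset Φ.R // S ∈ Φ.faces ∧ S.card = k}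

/-- The balancing condition at a codimension-one cone `τ`, as a linear map on weights:
`w ↦ ∑_{σ ⊃ τ} w(σ) • e_σ^τ ∈ N^τ`, where (by unimodularity) `e_σ^τ` is the class
of the generator of the extra ray of `σ`. -/
noncomputable def balL (k : ℕ) (T : Finset Φ.R) (_ : T ∈ Φ.faces) (hT : T.card + 1 = k) :
    ((Φ.FacesK k) → ℤ) →ₗ[ℤ] Φ.Q T :=
  ∑ r : Φ.R,
    if h : r ∉ T ∧ insert r T ∈ Φ.faces then
      LinearMap.smulRight
        (LinearMap.proj (⟨insert r T, h.2, by
          rw [Finset.card_insert_of_notMem h.1, hT]⟩ : Φ.FacesK k))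
        (Φ.qmap T (Φ.e r))
    else 0

/-- The group `MW_k(Φ)` of Minkowski weights of dimension `k`. -/
noncomputable def MWsub (k : ℕ) : Submodule ℤ ((Φ.FacesK k) → ℤ) :=
  ⨅ (T : Finset Φ.R) (h : T ∈ Φ.faces) (h2 : T.card + 1 = k),
    LinearMap.ker (Φ.balL k T h h2)

/-- The generator `x_σ = ∏_{ρ ≺ σ} x_ρ` of the Chow ring. -/
noncomputable def xcl (S : Finset Φ.R) : Φ.Chow :=
  Φ.chowMk (∏ r ∈ S, MvPolynomial.X r)

lemma xcl_mem_ChowGr (S : Finset Φ.R) (k : ℕ) (hk : S.card = k) :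
    Φ.xcl S ∈ Φ.ChowGr k := by
  refine Submodule.mem_map_of_mem ?_
  rw [MvPolynomial.mem_homogeneousSubmodule]
  subst hk
  have := MvPolynomial.IsHomogeneous.prod (R := ℤ) S (fun r => MvPolynomial.X r) (fun _ => 1)
    (fun r _ => MvPolynomial.isHomogeneous_X ℤ r)
  simpa using this

end UFan

namespace UFan

variable {n : ℕ} (Φ : UFan n)

/-- Coordinates along the rays of a cone `S`, from a lattice basis extending `{e r | r ∈ S}`.
The junk value `0` when `S` is not a cone is used throughout. -/
noncomputable def coord (S : Finset Φ.R) (r : Φ.R) : Module.Dual ℤ (NZ n) :=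
  if h : S ∈ Φ.faces ∧ r ∈ S then
    (Φ.unimodular S h.1).choose.coord ((Φ.unimodular S h.1).choose_spec.choose ⟨r, h.2⟩)
  else 0

variable {Φ}

lemma coord_e {S : Finset Φ.R} (hS : S ∈ Φ.faces) {r t : Φ.R} (hr : r ∈ S) (ht : t ∈ S) :
    Φ.coord S r (Φ.e t) = if r = t then 1 else 0 := by
  obtain ⟨hinj, hb⟩ := (Φ.unimodular S hS).choose_spec.choose_spec
  rw [coord, dif_pos ⟨hS, hr⟩, ← hb ⟨t, ht⟩, Module.Basis.coord_apply, Module.Basis.repr_self,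
    Finsupp.single_apply]
  simp only [hinj.eq_iff, Subtype.mk.injEq, eq_comm]

lemma coord_of_notMem_faces {S : Finset Φ.R} (hS : S ∉ Φ.faces) (r : Φ.R) :
    Φ.coord S r = 0 :=
  dif_neg fun h => hS h.1

lemma sum_coord_smul_e {S : Finset Φ.R} (hS : S ∈ Φ.faces) {x : NZ n} (hx : x ∈ Φ.Nsub S) :
    ∑ r ∈ S, Φ.coord S r x • Φ.e r = x := by
  let L : NZ n →ₗ[ℤ] NZ n := ∑ r ∈ S, (Φ.coord S r).smulRight (Φ.e r)
  have hgen : Set.EqOn L (LinearMap.id : NZ n →ₗ[ℤ] NZ n) (Φ.e '' (S : Set Φ.R)) := by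
    rintro _ ⟨t, ht, rfl⟩
    rw [LinearMap.id_apply, LinearMap.sum_apply]
    simp only [LinearMap.smulRight_apply]
    rw [Finset.sum_eq_single_of_mem t ht fun d hd hdt => by
      rw [coord_e hS hd ht, if_neg hdt, zero_smul], coord_e hS ht ht, if_pos rfl, one_smul]
  simpa [L] using LinearMap.eqOn_span hgen hx

lemma mem_Nsub_of_forall_dual {S : Finset Φ.R} (hS : S ∈ Φ.faces) {x : NZ n}
    (hx : ∀ m : Module.Dual ℤ (NZ n), (∀ t ∈ S, m (Φ.e t) = 0) → m x = 0) : x ∈ Φ.Nsub S := by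
  obtain ⟨b, f, -, hb⟩ := Φ.unimodular S hS
  have himage : Φ.e '' (S : Set Φ.R) = b '' Set.range f := by
    ext y
    constructor
    · rintro ⟨t, ht, rfl⟩
      exact ⟨_, ⟨⟨t, ht⟩, rfl⟩, hb ⟨t, ht⟩⟩
    · rintro ⟨_, ⟨t, rfl⟩, rfl⟩
      exact ⟨t, t.2, (hb t).symm⟩
  rw [Nsub, himage, Module.Basis.mem_span_image]
  intro i hi
  by_contra hif
  refine Finsupp.mem_support_iff.1 hi (hx (b.coord i) fun t ht => ?_)
  rw [← hb ⟨t, ht⟩, Module.Basis.coord_apply, Module.Basis.repr_self,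
    Finsupp.single_apply, if_neg fun h => hif ⟨_, h⟩]

lemma apply_eq_of_mem_Nsub_insert {T : Finset Φ.R} {r : Φ.R} (hr : r ∉ T)
    (hrT : insert r T ∈ Φ.faces) {s : NZ n} (hs : s ∈ Φ.Nsub (insert r T))
    (m : Module.Dual ℤ (NZ n)) :
    m s = Φ.coord (insert r T) r s * m (Φ.e r)
      + ∑ t ∈ T, Φ.coord (insert r T) t s * m (Φ.e t) := by
  conv_lhs => rw [← sum_coord_smul_e hrT hs]
  simp only [Finset.sum_insert hr, map_add, map_sum, map_smul, smul_eq_mul]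

variable (Φ)

/-- `∑_{σ ⊃ τ} v(σ) e_{σ/τ}` over the cones `σ = τ ∪ {r}` having `τ` as a facet, for a weight
`v` on the cones of all dimensions. -/
noncomputable def balancingSum (v : Finset Φ.R → ℤ) (T : Finset Φ.R) : NZ n :=
  ∑ r ∈ Tᶜ, v (insert r T) • Φ.e r

structure IsBalanced (v : Finset Φ.R → ℤ) : Prop where
  eq_zero_of_notMem : ∀ S ∉ Φ.faces, v S = 0
  balancingSum_mem : ∀ T ∈ Φ.faces, Φ.balancingSum v T ∈ Φ.Nsub T

variable {Φ} {v : Finset Φ.R → ℤ}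

lemma balancingSum_eq_zero_of_notMem_faces (hv : ∀ S ∉ Φ.faces, v S = 0) {T : Finset Φ.R}
    (hT : T ∉ Φ.faces) : Φ.balancingSum v T = 0 :=
  Finset.sum_eq_zero fun r _ => by
    rw [hv _ fun h => hT (Φ.down_closed _ h _ (Finset.subset_insert r T)), zero_smul]

lemma balancingSum_insert_add {T : Finset Φ.R} {r : Φ.R} (hr : r ∉ T) :
    Φ.balancingSum v (insert r T) + v (insert r T) • Φ.e r
      = ∑ u ∈ Tᶜ, v (insert u (insert r T)) • Φ.e u := by
  rw [balancingSum, Finset.compl_insert, ← Finset.sum_erase_add _ _ (Finset.mem_compl.2 hr),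
    Finset.insert_idem]

/-- Both sides are sums of `v(τ ∪ {r, u}) m(e_r) m'(e_u)` over the ordered pairs `r ≠ u` of rays
outside `τ`. -/
lemma sum_mul_apply_balancingSum_comm (T : Finset Φ.R) (m m' : Module.Dual ℤ (NZ n)) :
    ∑ r ∈ Tᶜ, m (Φ.e r) * m' (Φ.balancingSum v (insert r T))
      = ∑ r ∈ Tᶜ, m' (Φ.e r) * m (Φ.balancingSum v (insert r T)) := by
  have hexp : ∀ m m' : Module.Dual ℤ (NZ n),
      ∑ r ∈ Tᶜ, m (Φ.e r) * m' (Φ.balancingSum v (insert r T))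
        = ∑ r ∈ Tᶜ, ∑ u ∈ Tᶜ, v (insert u (insert r T)) * m (Φ.e r) * m' (Φ.e u)
          - ∑ r ∈ Tᶜ, v (insert r T) * m (Φ.e r) * m' (Φ.e r) := by
    intro m m'
    rw [← Finset.sum_sub_distrib]
    refine Finset.sum_congr rfl fun r hr => eq_sub_of_add_eq ?_
    calc m (Φ.e r) * m' (Φ.balancingSum v (insert r T)) + v (insert r T) * m (Φ.e r) * m' (Φ.e r)
        = m (Φ.e r) * m' (Φ.balancingSum v (insert r T) + v (insert r T) • Φ.e r) := by
          rw [map_add, map_smul, smul_eq_mul]; ring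
      _ = _ := by
          rw [balancingSum_insert_add (Finset.mem_compl.1 hr), map_sum, Finset.mul_sum]
          exact Finset.sum_congr rfl fun u _ => by rw [map_smul, smul_eq_mul]; ring
  rw [hexp, hexp, Finset.sum_comm]
  congr 1
  · exact Finset.sum_congr rfl fun r _ => Finset.sum_congr rfl fun u _ => by
      rw [Finset.insert_comm]; ring
  · exact Finset.sum_congr rfl fun r _ => by ring

lemma IsBalanced.coord_insert_balancingSum (hv : Φ.IsBalanced v) {T : Finset Φ.R} {r ρ : Φ.R}
    (hr : r ∉ T) (hρ : ρ ∈ T) :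
    Φ.coord (insert r T) ρ (Φ.balancingSum v (insert r T))
      = Φ.coord T ρ (Φ.balancingSum v (insert r T))
        - Φ.coord (insert r T) r (Φ.balancingSum v (insert r T)) * Φ.coord T ρ (Φ.e r) := by
  by_cases hrT : insert r T ∈ Φ.faces
  · have hT := Φ.down_closed _ hrT T (Finset.subset_insert r T)
    rw [apply_eq_of_mem_Nsub_insert hr hrT (hv.balancingSum_mem _ hrT) (Φ.coord T ρ),
      Finset.sum_eq_single_of_mem ρ hρ fun t ht htρ => by
        rw [coord_e hT hρ ht, if_neg (Ne.symm htρ), mul_zero],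
      coord_e hT hρ hρ, if_pos rfl, mul_one]
    ring
  · simp [balancingSum_eq_zero_of_notMem_faces hv.eq_zero_of_notMem hrT]

lemma IsBalanced.apply_balancingSum_insert (hv : Φ.IsBalanced v) {T : Finset Φ.R} {r : Φ.R}
    (hr : r ∉ T) {m : Module.Dual ℤ (NZ n)} (hm : ∀ t ∈ T, m (Φ.e t) = 0) :
    m (Φ.balancingSum v (insert r T))
      = Φ.coord (insert r T) r (Φ.balancingSum v (insert r T)) * m (Φ.e r) := by
  by_cases hrT : insert r T ∈ Φ.faces
  · rw [apply_eq_of_mem_Nsub_insert hr hrT (hv.balancingSum_mem _ hrT) m,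
      Finset.sum_eq_zero fun t ht => by rw [hm t ht, mul_zero], add_zero]
  · simp [balancingSum_eq_zero_of_notMem_faces hv.eq_zero_of_notMem hrT]

lemma IsBalanced.balancingSum_insert_sub_mem (hv : Φ.IsBalanced v) {T : Finset Φ.R}
    (hT : T ∈ Φ.faces) {r : Φ.R} (hr : r ∉ T) :
    Φ.balancingSum v (insert r T)
      - Φ.coord (insert r T) r (Φ.balancingSum v (insert r T)) • Φ.e r ∈ Φ.Nsub T :=
  mem_Nsub_of_forall_dual hT fun m hm => by
    rw [map_sub, map_smul, smul_eq_mul, hv.apply_balancingSum_insert hr hm, sub_self]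

variable (Φ)

/-- The intersection product `x_ρ · v`. On a cone `τ ∋ ρ` the divisor `x_ρ` is linearly
equivalent to `x_ρ - ℓ_m`, `m = e_ρ^*`, which involves only rays outside `τ`; hence the second
branch. -/
noncomputable def divisor (ρ : Φ.R) (v : Finset Φ.R → ℤ) (T : Finset Φ.R) : ℤ :=
  if ρ ∈ T then -Φ.coord T ρ (Φ.balancingSum v T) else v (insert ρ T)

variable {Φ}

lemma divisor_of_notMem {ρ : Φ.R} {T : Finset Φ.R} (hρ : ρ ∉ T) :
    Φ.divisor ρ v T = v (insert ρ T) :=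
  if_neg hρ

lemma divisor_of_mem {ρ : Φ.R} {T : Finset Φ.R} (hρ : ρ ∈ T) :
    Φ.divisor ρ v T = -Φ.coord T ρ (Φ.balancingSum v T) :=
  if_pos hρ

lemma balancingSum_divisor_of_notMem {ρ : Φ.R} {T : Finset Φ.R} (hρ : ρ ∉ T) :
    Φ.balancingSum (Φ.divisor ρ v) T = Φ.balancingSum v (insert ρ T)
      - Φ.coord (insert ρ T) ρ (Φ.balancingSum v (insert ρ T)) • Φ.e ρ := by
  have hρc : ρ ∈ Tᶜ := Finset.mem_compl.2 hρ
  rw [balancingSum, ← Finset.add_sum_erase _ _ hρc, divisor_of_mem (Finset.mem_insert_self ρ T),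
    neg_smul, neg_add_eq_sub, balancingSum, Finset.compl_insert]
  congr 1
  refine Finset.sum_congr rfl fun r hr => ?_
  have hρr : ρ ∉ insert r T := by
    simp only [Finset.mem_insert, not_or]
    exact ⟨fun h => Finset.ne_of_mem_erase hr h.symm, hρ⟩
  rw [divisor_of_notMem hρr, Finset.insert_comm]

lemma IsBalanced.apply_balancingSum_divisor_of_mem (hv : Φ.IsBalanced v) {ρ : Φ.R}
    {T : Finset Φ.R} (hρ : ρ ∈ T) (m : Module.Dual ℤ (NZ n)) :
    m (Φ.balancingSum (Φ.divisor ρ v) T)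
      = ∑ r ∈ Tᶜ, (Φ.coord (insert r T) r (Φ.balancingSum v (insert r T)) * Φ.coord T ρ (Φ.e r)
          - Φ.coord T ρ (Φ.balancingSum v (insert r T))) * m (Φ.e r) := by
  rw [balancingSum, map_sum]
  refine Finset.sum_congr rfl fun r hr => ?_
  rw [divisor_of_mem (Finset.mem_insert_of_mem hρ),
    hv.coord_insert_balancingSum (Finset.mem_compl.1 hr) hρ, map_smul, smul_eq_mul]
  ring

lemma IsBalanced.divisor (hv : Φ.IsBalanced v) (ρ : Φ.R) : Φ.IsBalanced (Φ.divisor ρ v) where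
  eq_zero_of_notMem S hS := by
    by_cases hρ : ρ ∈ S
    · rw [divisor_of_mem hρ, coord_of_notMem_faces hS, LinearMap.zero_apply, neg_zero]
    · exact (divisor_of_notMem hρ).trans <| hv.eq_zero_of_notMem _ fun h =>
        hS (Φ.down_closed _ h S (Finset.subset_insert ρ S))
  balancingSum_mem T hT := by
    by_cases hρ : ρ ∈ T
    · refine mem_Nsub_of_forall_dual hT fun m hm => ?_
      rw [hv.apply_balancingSum_divisor_of_mem hρ m]
      calc _ = ∑ r ∈ Tᶜ, Φ.coord T ρ (Φ.e r) * m (Φ.balancingSum v (insert r T))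
            - ∑ r ∈ Tᶜ, m (Φ.e r) * Φ.coord T ρ (Φ.balancingSum v (insert r T)) := by
            rw [← Finset.sum_sub_distrib]
            refine Finset.sum_congr rfl fun r hr => ?_
            rw [hv.apply_balancingSum_insert (Finset.mem_compl.1 hr) hm]
            ring
        _ = 0 := sub_eq_zero.2 (sum_mul_apply_balancingSum_comm T _ m)
    · rw [balancingSum_divisor_of_notMem hρ]
      exact hv.balancingSum_insert_sub_mem hT hρ

lemma IsBalanced.divisor_divisor_of_mem_of_notMem (hv : Φ.IsBalanced v) {ρ ρ' : Φ.R}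
    {T : Finset Φ.R} (hρ : ρ ∈ T) (hρ' : ρ' ∉ T) :
    Φ.divisor ρ (Φ.divisor ρ' v) T = Φ.divisor ρ' (Φ.divisor ρ v) T := by
  rw [divisor_of_mem hρ, balancingSum_divisor_of_notMem hρ', divisor_of_notMem hρ',
    divisor_of_mem (Finset.mem_insert_of_mem hρ), hv.coord_insert_balancingSum hρ' hρ,
    map_sub, map_smul, smul_eq_mul, mul_comm]

lemma IsBalanced.divisor_comm (hv : Φ.IsBalanced v) (ρ ρ' : Φ.R) :
    Φ.divisor ρ (Φ.divisor ρ' v) = Φ.divisor ρ' (Φ.divisor ρ v) := by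
  funext T
  by_cases hρ : ρ ∈ T <;> by_cases hρ' : ρ' ∈ T
  · rw [divisor_of_mem hρ, divisor_of_mem hρ', neg_inj,
      hv.apply_balancingSum_divisor_of_mem hρ', hv.apply_balancingSum_divisor_of_mem hρ,
      ← sub_eq_zero, ← Finset.sum_sub_distrib]
    have hsymm :=
      sub_eq_zero.2 (sum_mul_apply_balancingSum_comm (v := v) T (Φ.coord T ρ) (Φ.coord T ρ'))
    rw [← Finset.sum_sub_distrib] at hsymm
    rw [← neg_eq_zero, ← Finset.sum_neg_distrib, ← hsymm]
    exact Finset.sum_congr rfl fun r _ => by ring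
  · exact hv.divisor_divisor_of_mem_of_notMem hρ hρ'
  · exact (hv.divisor_divisor_of_mem_of_notMem hρ' hρ).symm
  · by_cases hρρ' : ρ = ρ'
    · rw [hρρ']
    have hρ'ρ : ρ' ∉ insert ρ T := by simp [hρ', Ne.symm hρρ']
    have hρρ'' : ρ ∉ insert ρ' T := by simp [hρ, hρρ']
    rw [divisor_of_notMem hρ, divisor_of_notMem hρ', divisor_of_notMem hρ'ρ,
      divisor_of_notMem hρρ'', Finset.insert_comm]

lemma divisor_union_mem_faces {C : Finset Φ.R} (hv : ∀ S, v S ≠ 0 → S ∪ C ∈ Φ.faces)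
    (ρ : Φ.R) {S : Finset Φ.R} (hS : Φ.divisor ρ v S ≠ 0) : S ∪ insert ρ C ∈ Φ.faces := by
  by_cases hρ : ρ ∈ S
  · rw [divisor_of_mem hρ, neg_ne_zero] at hS
    obtain ⟨r, -, hr⟩ := Finset.exists_ne_zero_of_sum_ne_zero fun h => hS (by
      rw [balancingSum, h, map_zero])
    have hrS := hv _ (left_ne_zero_of_smul hr)
    rw [Finset.union_insert, Finset.insert_eq_of_mem (Finset.mem_union_left C hρ)]
    exact Φ.down_closed _ hrS _ (Finset.union_subset_union_left (Finset.subset_insert r S))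
  · rw [divisor_of_notMem hρ] at hS
    rw [Finset.union_insert, ← Finset.insert_union]
    exact hv _ hS

variable (Φ)

abbrev BalancedWeight := {v : Finset Φ.R → ℤ // Φ.IsBalanced v}

noncomputable def divisorBW (ρ : Φ.R) (v : Φ.BalancedWeight) : Φ.BalancedWeight :=
  ⟨Φ.divisor ρ v.1, v.2.divisor ρ⟩

instance : LeftCommutative Φ.divisorBW :=
  ⟨fun ρ ρ' v => Subtype.ext (v.2.divisor_comm ρ ρ')⟩

noncomputable def iterDivisor (s : Multiset Φ.R) (v : Φ.BalancedWeight) : Φ.BalancedWeight :=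
  s.foldr Φ.divisorBW v

variable {Φ}

lemma iterDivisor_cons (ρ : Φ.R) (s : Multiset Φ.R) (v : Φ.BalancedWeight) :
    (Φ.iterDivisor (ρ ::ₘ s) v).1 = Φ.divisor ρ (Φ.iterDivisor s v).1 := by
  rw [iterDivisor, Multiset.foldr_cons]
  rfl

lemma iterDivisor_apply_of_disjoint (v : Φ.BalancedWeight) {s : Multiset Φ.R} (hs : s.Nodup) :
    ∀ {T : Finset Φ.R}, (∀ r ∈ s, r ∉ T) → (Φ.iterDivisor s v).1 T = v.1 (T ∪ s.toFinset) := by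
  induction s using Multiset.induction_on with
  | empty => intro T _; simp [iterDivisor]
  | cons ρ s ih =>
    intro T hT
    rw [Multiset.nodup_cons] at hs
    rw [iterDivisor_cons, divisor_of_notMem (hT ρ (Multiset.mem_cons_self ρ s)),
      ih hs.2 fun r hr hrT => ?_, Multiset.toFinset_cons, Finset.union_insert, Finset.insert_union]
    rcases Finset.mem_insert.1 hrT with rfl | hrT
    · exact hs.1 hr
    · exact hT r (Multiset.mem_cons_of_mem hr) hrT

lemma iterDivisor_apply_val_empty (v : Φ.BalancedWeight) (S : Finset Φ.R) :
    (Φ.iterDivisor S.val v).1 ∅ = v.1 S := by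
  rw [iterDivisor_apply_of_disjoint v S.nodup fun _ _ => Finset.notMem_empty _,
    Finset.empty_union, Finset.val_toFinset]

lemma iterDivisor_union_mem_faces (v : Φ.BalancedWeight) (s : Multiset Φ.R) {S : Finset Φ.R}
    (hS : (Φ.iterDivisor s v).1 S ≠ 0) : S ∪ s.toFinset ∈ Φ.faces := by
  induction s using Multiset.induction_on generalizing S with
  | empty =>
    rw [Multiset.toFinset_zero, Finset.union_empty]
    exact by_contra fun h => hS (v.2.eq_zero_of_notMem S h)
  | cons ρ s ih =>
    rw [iterDivisor_cons] at hS
    rw [Multiset.toFinset_cons]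
    exact divisor_union_mem_faces (fun S' hS' => ih hS') ρ hS

open MvPolynomial

lemma prod_X_eq_monomial (S : Finset Φ.R) :
    ∏ r ∈ S, (X r : MvPolynomial Φ.R ℤ) = monomial (Multiset.toFinsupp S.val) 1 := by
  rw [← one_nsmul S.val, ← Finsupp.toMultiset_sum_single, Finsupp.toMultiset_toFinsupp,
    monomial_sum_one]
  rfl

lemma X_mul_monomial_toFinsupp (r : Φ.R) (s : Multiset Φ.R) :
    (X r : MvPolynomial Φ.R ℤ) * monomial (Multiset.toFinsupp s) 1
      = monomial (Multiset.toFinsupp (r ::ₘ s)) 1 := by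
  rw [X, monomial_mul, one_mul, ← Multiset.singleton_add, Multiset.toFinsupp_add,
    Multiset.toFinsupp_singleton]

lemma Nsub_empty : Φ.Nsub ∅ = ⊥ := by
  rw [Nsub, Finset.coe_empty, Set.image_empty, Submodule.span_empty]

variable (Φ)

noncomputable def polyPairing (v : Φ.BalancedWeight) : MvPolynomial Φ.R ℤ →ₗ[ℤ] ℤ :=
  (basisMonomials Φ.R ℤ).constr ℤ fun a => (Φ.iterDivisor (Finsupp.toMultiset a) v).1 ∅

variable {Φ}

lemma polyPairing_monomial (v : Φ.BalancedWeight) (a : Φ.R →₀ ℕ) (c : ℤ) :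
    Φ.polyPairing v (monomial a c) = c * (Φ.iterDivisor (Finsupp.toMultiset a) v).1 ∅ := by
  have hbasis : monomial a c = c • basisMonomials Φ.R ℤ a := by
    rw [coe_basisMonomials, smul_monomial, smul_eq_mul, mul_one]
  rw [hbasis, map_smul, polyPairing, Module.Basis.constr_basis, smul_eq_mul]

lemma polyPairing_mul_prod_X_of_notMem_faces (v : Φ.BalancedWeight) {S : Finset Φ.R}
    (hS : S ∉ Φ.faces) (Q : MvPolynomial Φ.R ℤ) :
    Φ.polyPairing v (Q * ∏ r ∈ S, X r) = 0 := by
  induction Q using MvPolynomial.induction_on' with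
  | add p q hp hq => rw [add_mul, map_add, hp, hq, add_zero]
  | monomial a c =>
    rw [prod_X_eq_monomial, monomial_mul, mul_one, polyPairing_monomial, map_add,
      Multiset.toFinsupp_toMultiset]
    refine mul_eq_zero_of_right c (by_contra fun h => hS ?_)
    have hface := iterDivisor_union_mem_faces v _ h
    rw [Finset.empty_union, Multiset.toFinset_add, Finset.val_toFinset] at hface
    exact Φ.down_closed _ hface S Finset.subset_union_right

lemma polyPairing_mul_linearForm (v : Φ.BalancedWeight) (m : Module.Dual ℤ (NZ n))
    (Q : MvPolynomial Φ.R ℤ) :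
    Φ.polyPairing v (Q * ∑ r, m (Φ.e r) • X r) = 0 := by
  induction Q using MvPolynomial.induction_on' with
  | add p q hp hq => rw [add_mul, map_add, hp, hq, add_zero]
  | monomial a c =>
    set u := Φ.iterDivisor (Finsupp.toMultiset a) v
    have hterm : ∀ r, Φ.polyPairing v (monomial a c * (m (Φ.e r) • X r))
        = c * (u.1 (insert r ∅) * m (Φ.e r)) := fun r => by
      rw [mul_smul_comm, map_smul, X, monomial_mul, mul_one, polyPairing_monomial, map_add,
        Finsupp.toMultiset_single, one_nsmul, add_comm, Multiset.singleton_add, iterDivisor_cons,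
        divisor_of_notMem (Finset.notMem_empty r), smul_eq_mul]
      ring
    have hbal : Φ.balancingSum u.1 ∅ = 0 := by
      simpa [Nsub_empty] using u.2.balancingSum_mem ∅ Φ.empty_mem
    have hsum : ∑ r, u.1 (insert r ∅) * m (Φ.e r) = m (Φ.balancingSum u.1 ∅) := by
      simp only [balancingSum, Finset.compl_empty, map_sum, map_smul, smul_eq_mul]
    rw [Finset.mul_sum, map_sum, Finset.sum_congr rfl fun r _ => hterm r, ← Finset.mul_sum, hsum,
      hbal, map_zero, mul_zero]

lemma polyPairing_eq_zero_of_mem (v : Φ.BalancedWeight) {x : MvPolynomial Φ.R ℤ}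
    (hx : x ∈ Φ.Iideal + Φ.Jideal) : Φ.polyPairing v x = 0 := by
  rw [Iideal, Jideal, Submodule.add_eq_sup, ← Ideal.span_union] at hx
  suffices ∀ Q, Φ.polyPairing v (Q * x) = 0 by simpa using this 1
  induction hx using Submodule.span_induction with
  | mem g hg =>
    rcases hg with ⟨S, hS, rfl⟩ | ⟨m, rfl⟩
    · exact polyPairing_mul_prod_X_of_notMem_faces v hS
    · exact polyPairing_mul_linearForm v m
  | zero => simp
  | add x y _ _ hx hy => exact fun Q => by rw [mul_add, map_add, hx, hy, add_zero]
  | smul a x _ hx => exact fun Q => by rw [smul_eq_mul, ← mul_assoc, hx]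

variable (Φ)

noncomputable def chowPairing (v : Φ.BalancedWeight) : Φ.Chow →ₗ[ℤ] ℤ :=
  (Submodule.liftQ ((Φ.Iideal + Φ.Jideal).restrictScalars ℤ) (Φ.polyPairing v)
      fun _ hx => polyPairing_eq_zero_of_mem v hx).comp
    (Submodule.Quotient.restrictScalarsEquiv ℤ (Φ.Iideal + Φ.Jideal)).symm.toLinearMap

variable {Φ}

lemma chowPairing_xcl (v : Φ.BalancedWeight) (S : Finset Φ.R) :
    Φ.chowPairing v (Φ.xcl S) = v.1 S := by
  change Φ.chowPairing v (Submodule.Quotient.mk _) = _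
  rw [chowPairing, LinearMap.comp_apply, LinearEquiv.coe_toLinearMap,
    Submodule.Quotient.restrictScalarsEquiv_symm_mk]
  change Φ.polyPairing v (∏ r ∈ S, X r) = _
  rw [prod_X_eq_monomial, polyPairing_monomial, Multiset.toFinsupp_toMultiset, one_mul,
    iterDivisor_apply_val_empty]

variable (Φ)

noncomputable def extend (k : ℕ) (w : Φ.FacesK k → ℤ) (S : Finset Φ.R) : ℤ :=
  if h : S ∈ Φ.faces ∧ S.card = k then w ⟨S, h⟩ else 0

variable {Φ}

lemma balL_apply {k : ℕ} {T : Finset Φ.R} (hT : T ∈ Φ.faces) (hk : T.card + 1 = k)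
    (w : Φ.FacesK k → ℤ) :
    Φ.balL k T hT hk w = Φ.qmap T (Φ.balancingSum (Φ.extend k w) T) := by
  rw [balL, LinearMap.sum_apply, balancingSum, map_sum, ← Finset.sum_compl_add_sum T,
    Finset.sum_eq_zero (s := T) fun r hr => by rw [dif_neg fun h => h.1 hr, LinearMap.zero_apply],
    add_zero]
  refine Finset.sum_congr rfl fun r hr => ?_
  have hr' := Finset.mem_compl.1 hr
  have hcard : (insert r T).card = k := by rw [Finset.card_insert_of_notMem hr', hk]
  by_cases hrT : insert r T ∈ Φ.faces
  · rw [dif_pos ⟨hr', hrT⟩, extend, dif_pos ⟨hrT, hcard⟩, map_smul, LinearMap.smulRight_apply,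
      LinearMap.proj_apply]
  · rw [dif_neg fun h => hrT h.2, extend, dif_neg fun h => hrT h.1, zero_smul, map_zero,
      LinearMap.zero_apply]

lemma mem_MWsub_iff {k : ℕ} {w : Φ.FacesK k → ℤ} :
    w ∈ Φ.MWsub k ↔
      ∀ T ∈ Φ.faces, T.card + 1 = k → Φ.balancingSum (Φ.extend k w) T ∈ Φ.Nsub T := by
  simp only [MWsub, Submodule.mem_iInf, LinearMap.mem_ker, balL_apply, qmap, Submodule.mkQ_apply,
    Submodule.Quotient.mk_eq_zero]

lemma isBalanced_extend {k : ℕ} {w : Φ.FacesK k → ℤ} (hw : w ∈ Φ.MWsub k) :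
    Φ.IsBalanced (Φ.extend k w) where
  eq_zero_of_notMem S hS := dif_neg fun h => hS h.1
  balancingSum_mem T hT := by
    by_cases hk : T.card + 1 = k
    · exact mem_MWsub_iff.1 hw T hT hk
    · convert (Φ.Nsub T).zero_mem
      refine Finset.sum_eq_zero fun r hr => ?_
      rw [extend, dif_neg fun h => hk ?_, zero_smul]
      rw [← h.2, Finset.card_insert_of_notMem (Finset.mem_compl.1 hr)]

lemma chowMk_mul_prod_X_of_notMem_faces {S : Finset Φ.R} (hS : S ∉ Φ.faces)
    (Q : MvPolynomial Φ.R ℤ) : Φ.chowMk (Q * ∏ r ∈ S, X r) = 0 := by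
  rw [chowMk, Ideal.Quotient.mkₐ_eq_mk, Ideal.Quotient.eq_zero_iff_mem]
  exact Ideal.mul_mem_left _ _ (Submodule.mem_sup_left (Ideal.subset_span ⟨S, hS, rfl⟩))

lemma xcl_of_notMem_faces {S : Finset Φ.R} (hS : S ∉ Φ.faces) : Φ.xcl S = 0 := by
  rw [xcl, ← one_mul (∏ r ∈ S, X r), chowMk_mul_prod_X_of_notMem_faces hS]

lemma chowMk_linearForm_mul (m : Module.Dual ℤ (NZ n)) (Q : MvPolynomial Φ.R ℤ) :
    Φ.chowMk ((∑ r, m (Φ.e r) • X r) * Q) = 0 := by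
  rw [chowMk, Ideal.Quotient.mkₐ_eq_mk, Ideal.Quotient.eq_zero_iff_mem]
  exact Ideal.mul_mem_right _ _ (Submodule.mem_sup_right (Ideal.subset_span ⟨m, rfl⟩))

/-- The relation `ℓ_m · x_τ = 0` for a linear form `m` vanishing on the rays of `τ`. -/
lemma sum_smul_xcl_insert_eq_zero {T : Finset Φ.R} {m : Module.Dual ℤ (NZ n)}
    (hm : ∀ t ∈ T, m (Φ.e t) = 0) : ∑ r ∈ Tᶜ, m (Φ.e r) • Φ.xcl (insert r T) = 0 := by
  have hrel := chowMk_linearForm_mul (Φ := Φ) m (∏ t ∈ T, X t)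
  rw [Finset.sum_mul, map_sum, ← Finset.sum_compl_add_sum T,
    Finset.sum_eq_zero (s := T) fun r hr => by rw [hm r hr, zero_smul, zero_mul, map_zero],
    add_zero] at hrel
  rw [← hrel]
  refine Finset.sum_congr rfl fun r hr => ?_
  rw [smul_mul_assoc, map_smul, xcl, Finset.prod_insert (Finset.mem_compl.1 hr)]

/-- On a cone `σ ∋ ρ`, `x_ρ - ℓ_m` with `m = e_ρ^*` involves only rays outside `σ`. -/
lemma chowMk_X_mul_eq_neg_sum {S : Finset Φ.R} (hS : S ∈ Φ.faces) {ρ : Φ.R} (hρ : ρ ∈ S)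
    (Q : MvPolynomial Φ.R ℤ) :
    Φ.chowMk (X ρ * Q) = -∑ r ∈ Sᶜ, Φ.coord S ρ (Φ.e r) • Φ.chowMk (X r * Q) := by
  have hrel := chowMk_linearForm_mul (Φ := Φ) (Φ.coord S ρ) Q
  simp only [Finset.sum_mul, map_sum, smul_mul_assoc, map_smul] at hrel
  rwa [← Finset.sum_add_sum_compl S, Finset.sum_eq_single_of_mem ρ hρ fun r hr hrρ => by
      rw [coord_e hS hρ hr, if_neg (Ne.symm hrρ), zero_smul],
    coord_e hS hρ hρ, if_pos rfl, one_smul, add_eq_zero_iff_eq_neg] at hrel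

/-- Induction on `deg - #support`: a repeated variable is traded for variables outside the
support by `chowMk_X_mul_eq_neg_sum`. -/
lemma chowMk_monomial_mem_span {k : ℕ} (s : Multiset Φ.R) (hs : Multiset.card s = k) :
    Φ.chowMk (monomial (Multiset.toFinsupp s) 1)
      ∈ Submodule.span ℤ (Set.range fun σ : Φ.FacesK k => Φ.xcl σ.1) := by
  induction hμ : Multiset.card s - s.toFinset.card using Nat.strong_induction_on generalizing s
    with
  | _ μ ih =>
  by_cases hS : s.toFinset ∈ Φ.faces
  swap
  · have hdvd : monomial (Multiset.toFinsupp s) (1 : ℤ)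
        = monomial (Multiset.toFinsupp (s - s.toFinset.val)) 1 * ∏ r ∈ s.toFinset, X r := by
      rw [prod_X_eq_monomial, monomial_mul, one_mul, ← Multiset.toFinsupp_add,
        Multiset.toFinset_val, tsub_add_cancel_of_le (Multiset.dedup_le s)]
    rw [hdvd, chowMk_mul_prod_X_of_notMem_faces hS]
    exact Submodule.zero_mem _
  by_cases hnd : s.Nodup
  · have hval : s.toFinset.val = s := by rw [Multiset.toFinset_val, Multiset.dedup_eq_self.2 hnd]
    refine Submodule.subset_span ⟨⟨s.toFinset, hS, by rw [Finset.card_def, hval, hs]⟩, ?_⟩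
    change Φ.chowMk _ = _
    rw [prod_X_eq_monomial, hval]
  obtain ⟨ρ, t, rfl⟩ : ∃ ρ t, s = ρ ::ₘ ρ ::ₘ t := by
    simpa [Multiset.nodup_iff_ne_cons_cons] using hnd
  set S := (ρ ::ₘ ρ ::ₘ t).toFinset
  rw [← X_mul_monomial_toFinsupp, chowMk_X_mul_eq_neg_sum hS (Multiset.mem_toFinset.2
    (Multiset.mem_cons_self ρ _))]
  refine Submodule.neg_mem _ (Submodule.sum_mem _ fun r hr => Submodule.smul_mem _ _ ?_)
  have hcard : (r ::ₘ ρ ::ₘ t).toFinset.card = S.card + 1 := by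
    rw [Multiset.toFinset_cons r, Finset.card_insert_of_notMem (by simpa [S] using hr)]
    simp [S]
  have hle : S.card ≤ Multiset.card (ρ ::ₘ t) := by
    simpa [S] using Multiset.toFinset_card_le (ρ ::ₘ t)
  rw [X_mul_monomial_toFinsupp]
  refine ih _ ?_ _ (by simpa using hs) rfl
  rw [← hμ, hcard]
  simp only [Multiset.card_cons] at hle ⊢
  omega

lemma ChowGr_eq_span_xcl (k : ℕ) :
    Φ.ChowGr k = Submodule.span ℤ (Set.range fun σ : Φ.FacesK k => Φ.xcl σ.1) := by
  refine le_antisymm ?_ (Submodule.span_le.2 ?_)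
  · rw [ChowGr, homogeneousSubmodule_eq_finsupp_supported,
      AddMonoidAlgebra.supported_eq_span_single, Submodule.map_span, Submodule.span_le]
    rintro _ ⟨_, ⟨d, hd, rfl⟩, rfl⟩
    dsimp only
    rw [AlgHom.toLinearMap_apply, single_eq_monomial, ← Finsupp.toMultiset_toFinsupp d]
    refine chowMk_monomial_mem_span _ ?_
    rw [Finsupp.card_toMultiset, ← hd]
    rfl
  · rintro _ ⟨σ, rfl⟩
    exact Φ.xcl_mem_ChowGr σ.1 k σ.2.2

lemma span_xcl_eq_top (k : ℕ) :
    Submodule.span ℤ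
        (Set.range fun σ : Φ.FacesK k => (⟨Φ.xcl σ.1, Φ.xcl_mem_ChowGr σ.1 k σ.2.2⟩ : Φ.ChowGr k))
      = ⊤ := by
  refine Submodule.map_injective_of_injective (Φ.ChowGr k).injective_subtype ?_
  rw [Submodule.map_span, ← Set.range_comp, Submodule.map_subtype_top]
  exact (ChowGr_eq_span_xcl k).symm

lemma mem_MWsub_of_chowGr (k : ℕ) (φ : Φ.ChowGr k →ₗ[ℤ] ℤ) :
    (fun σ : Φ.FacesK k => φ ⟨Φ.xcl σ.1, Φ.xcl_mem_ChowGr σ.1 k σ.2.2⟩) ∈ Φ.MWsub k := by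
  set w : Φ.FacesK k → ℤ := fun σ => φ ⟨Φ.xcl σ.1, Φ.xcl_mem_ChowGr σ.1 k σ.2.2⟩
  refine mem_MWsub_iff.2 fun T hT hk => mem_Nsub_of_forall_dual hT fun m hm => ?_
  have hcard : ∀ r ∈ Tᶜ, (insert r T).card = k := fun r hr => by
    rw [Finset.card_insert_of_notMem (Finset.mem_compl.1 hr), hk]
  have hext : ∀ r (hr : r ∈ Tᶜ), Φ.extend k w (insert r T)
      = φ ⟨Φ.xcl (insert r T), Φ.xcl_mem_ChowGr _ k (hcard r hr)⟩ := fun r hr => by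
    by_cases hrT : insert r T ∈ Φ.faces
    · exact dif_pos ⟨hrT, hcard r hr⟩
    · rw [extend, dif_neg fun h => hrT h.1]
      simp_rw [xcl_of_notMem_faces hrT]
      exact (map_zero φ).symm
  have hrel : ∑ r ∈ Tᶜ.attach, m (Φ.e r) •
      (⟨Φ.xcl (insert r.1 T), Φ.xcl_mem_ChowGr _ k (hcard r r.2)⟩ : Φ.ChowGr k) = 0 := by
    ext1
    simp only [Submodule.coe_sum, Submodule.coe_smul, Submodule.coe_zero]
    rw [Finset.sum_attach Tᶜ fun r => m (Φ.e r) • Φ.xcl (insert r T)]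
    exact sum_smul_xcl_insert_eq_zero hm
  rw [balancingSum, map_sum, ← Finset.sum_attach, ← map_zero φ, ← hrel, map_sum]
  refine Finset.sum_congr rfl fun r _ => ?_
  rw [map_smul, map_smul, hext r r.2, smul_eq_mul, smul_eq_mul, mul_comm]

variable (Φ)

noncomputable def restrictToCones (k : ℕ) : (Φ.ChowGr k →ₗ[ℤ] ℤ) →ₗ[ℤ] Φ.MWsub k where
  toFun φ := ⟨_, mem_MWsub_of_chowGr k φ⟩
  map_add' _ _ := rfl
  map_smul' _ _ := rfl

variable {Φ}

lemma restrictToCones_injective (k : ℕ) : Function.Injective (Φ.restrictToCones k) :=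
  fun _ _ h => LinearMap.ext_on (span_xcl_eq_top k) <| by
    rintro _ ⟨σ, rfl⟩
    exact congrFun (congrArg Subtype.val h) σ

lemma restrictToCones_surjective (k : ℕ) : Function.Surjective (Φ.restrictToCones k) :=
  fun w => ⟨(Φ.chowPairing ⟨_, isBalanced_extend w.2⟩).comp (Φ.ChowGr k).subtype,
    Subtype.ext <| funext fun σ => (chowPairing_xcl _ σ.1).trans (dif_pos σ.2)⟩

end UFan

/-- Let `Φ` be a unimodular fan.  The pairing
`A^k(Φ) ⊗ MW_k(Φ) → ℤ`, `x_σ ⊗ w ↦ w(σ)`, is well defined and induces an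
isomorphism `MW_k(Φ) ≅ Hom(A^k(Φ), ℤ)`. -/
theorem chow_minkowski_duality {n : ℕ} (Φ : UFan n) (k : ℕ) :
    ∃ Ψ : ↥(Φ.MWsub k) ≃ₗ[ℤ] (↥(Φ.ChowGr k) →ₗ[ℤ] ℤ),
      ∀ (w : ↥(Φ.MWsub k)) (S : Finset Φ.R) (hS : S ∈ Φ.faces) (hk : S.card = k),
        Ψ w ⟨Φ.xcl S, Φ.xcl_mem_ChowGr S k hk⟩ = w.1 ⟨S, hS, hk⟩ := by
  let E := LinearEquiv.ofBijective (Φ.restrictToCones k)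
    ⟨UFan.restrictToCones_injective k, UFan.restrictToCones_surjective k⟩
  exact ⟨E.symm, fun w S hS hk =>
    congrFun (congrArg Subtype.val (E.apply_symm_apply w)) ⟨S, hS, hk⟩⟩
end

section
/- Positive-sedentarity-vanishing lemma: let Σ be a unimodular fan, ζ a nonzero cone of Σ, and c ∈ C^{p,q}(Σ̄) a tropical cocycle (dc = 0) supported on faces contained in the stratum at infinity of ζ. Then c = 0. -/
open scoped DirectSum NNReal

namespace UFan

variable {n : ℕ} (Φ : UFan n)

noncomputable instance (td : TropData Φ) (p q : ℕ) : AddCommGroup (LinearMap.ker (Φ.bdryTo td p q)) :=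
  @Submodule.addCommGroup ℤ (Φ.Cch p q) _ _ _ (LinearMap.ker (Φ.bdryTo td p q))

end UFan

/-! Pick a ray `r ∈ ζ`; then `c` vanishes on every face whose sedentarity misses `r`.
Let `r` lie in the sedentarity `τ` of a face `δ = □_σ^τ`. Then `δ` is a facet of
exactly one face of sedentarity `τ ∖ {r}`, namely `μ = □_σ^{τ∖r}`, and every other facet of `μ`
has sedentarity not containing `r`. The component `F^p(□_σ^τ) → F^p(□_σ^{τ∖r})` of `d` is
injective (dually: `F_p(μ) → F_p(δ)` is surjective), so if `c` is a cocycle vanishing on faces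
whose sedentarity misses `r`, evaluating `dc = 0` on `F_p(μ)` leaves only `± c|_δ`, which
therefore vanishes. -/

namespace UFan

variable {n : ℕ} (Φ : UFan n)

lemma proj_comp_qmap {T T' : Finset Φ.R} (h : T ⊆ T') :
    (Φ.proj h).comp (Φ.qmap T) = Φ.qmap T' := by
  rw [proj, qmap, qmap, Submodule.mapQ_mkQ, LinearMap.comp_id]

lemma emap_comp_map_qmap (S : Finset Φ.R) {T T' : Finset Φ.R} (h : T ⊆ T') :
    (Φ.emap h).comp (ExteriorAlgebra.map ((Φ.qmap T).comp (Φ.Nsub S).subtype)).toLinearMap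
      = (ExteriorAlgebra.map ((Φ.qmap T').comp (Φ.Nsub S).subtype)).toLinearMap := by
  rw [emap, ← AlgHom.comp_toLinearMap, ExteriorAlgebra.map_comp_map,
    ← LinearMap.comp_assoc, Φ.proj_comp_qmap h]

lemma Fmod_le_map_emap (p : ℕ) {T T' : Finset Φ.R} (h : T ⊆ T') (S : Finset Φ.R) :
    Φ.Fmod p T' S ≤ (Φ.Fmod p T S).map (Φ.emap h) := by
  refine iSup₂_le fun S' hS' => iSup_le fun hSS' => ?_
  rw [← Φ.emap_comp_map_qmap S' h, Submodule.map_comp]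
  exact Submodule.map_mono (le_iSup₂_of_le S' hS' (le_iSup_of_le hSS' le_rfl))

lemma imap_surjective (td : TropData Φ) (p : ℕ) {q : ℕ}
    {γ : Φ.FaceIdx q} {δ : Φ.FaceIdx (q + 1)} (h : Φ.Adj γ δ) (hσ : γ.1.2 = δ.1.2) :
    Function.Surjective (td.imap p γ δ h) := by
  rintro ⟨x, hx⟩
  obtain ⟨y, hy, hxy⟩ := Φ.Fmod_le_map_emap p h.1 δ.1.2 (hσ ▸ hx)
  exact ⟨⟨y, hy⟩, Subtype.ext ((td.imap_spec p γ δ h ⟨y, hy⟩).trans hxy)⟩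

lemma FaceIdx.eq_of_subset {q : ℕ} {γ δ : Φ.FaceIdx q}
    (hτ : δ.1.1 ⊆ γ.1.1) (hσ : γ.1.2 ⊆ δ.1.2) : γ = δ := by
  have hcard_τ := Finset.card_le_card hτ
  have hcard_σ := Finset.card_le_card hσ
  have hγ := γ.2.2.2
  have hδ := δ.2.2.2
  have hσ_eq : γ.1.2 = δ.1.2 := Finset.eq_of_subset_of_card_le hσ (by omega)
  have hτ_eq : δ.1.1 = γ.1.1 := Finset.eq_of_subset_of_card_le hτ (by rw [hσ_eq] at hγ; omega)
  exact Subtype.ext (Prod.ext hτ_eq.symm hσ_eq)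

def FaceIdx.eraseSed {q : ℕ} (δ : Φ.FaceIdx q) {r : Φ.R} (hr : r ∈ δ.1.1) :
    Φ.FaceIdx (q + 1) :=
  ⟨(δ.1.1.erase r, δ.1.2), (Finset.erase_subset r _).trans δ.2.1, δ.2.2.1, by
    have := Finset.card_pos.2 ⟨r, hr⟩
    rw [Finset.card_erase_of_mem hr, δ.2.2.2]
    omega⟩

lemma FaceIdx.adj_eraseSed {q : ℕ} (δ : Φ.FaceIdx q) {r : Φ.R} (hr : r ∈ δ.1.1) :
    Φ.Adj δ (δ.eraseSed Φ hr) :=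
  ⟨Finset.erase_subset r _, subset_rfl⟩

lemma FaceIdx.eq_of_adj_eraseSed {q : ℕ} {γ δ : Φ.FaceIdx q} {r : Φ.R} (hr : r ∈ δ.1.1)
    (hadj : Φ.Adj γ (δ.eraseSed Φ hr)) (hrγ : r ∈ γ.1.1) : γ = δ := by
  refine FaceIdx.eq_of_subset Φ (fun a ha => ?_) hadj.2
  by_cases har : a = r
  · exact har ▸ hrγ
  · exact hadj.1 (Finset.mem_erase.2 ⟨har, ha⟩)

lemma coder_apply_lof (td : TropData Φ) (p q : ℕ) (c : Φ.Cco p q) (μ : Φ.FaceIdx (q + 1))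
    (y : Φ.Fmod p μ.1.1 μ.1.2) :
    Φ.coder td p q c (DirectSum.lof ℤ _ (fun γ => ↥(Φ.Fmod p γ.1.1 γ.1.2)) μ y) =
      ∑ γ : Φ.FaceIdx q, if h : Φ.Adj γ μ then
        td.ε q γ μ • c (DirectSum.lof ℤ _ (fun γ => ↥(Φ.Fmod p γ.1.1 γ.1.2)) γ
          (td.imap p γ μ h y)) else 0 := by
  rw [coder, LinearMap.dualMap_apply, bdry, DirectSum.toModule_lof, LinearMap.sum_apply, map_sum]
  refine Finset.sum_congr rfl fun γ _ => ?_
  split_ifs <;> simp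

theorem eq_zero_of_coder_eq_zero_of_vanishing_off_ray (td : TropData Φ) (p q : ℕ)
    (c : Φ.Cco p q) (hcocycle : Φ.coder td p q c = 0) (r : Φ.R)
    (hsupp : ∀ γ : Φ.FaceIdx q, r ∉ γ.1.1 → ∀ x : ↥(Φ.Fmod p γ.1.1 γ.1.2),
      c (DirectSum.lof ℤ (Φ.FaceIdx q) (fun γ => ↥(Φ.Fmod p γ.1.1 γ.1.2)) γ x) = 0) :
    c = 0 := by
  refine DirectSum.linearMap_ext ℤ fun δ => LinearMap.ext fun x => ?_
  by_cases hr : r ∉ δ.1.1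
  · exact hsupp δ hr x
  rw [not_not] at hr
  have hadj := δ.adj_eraseSed Φ hr
  obtain ⟨y, rfl⟩ := Φ.imap_surjective td p hadj rfl x
  have hd := LinearMap.congr_fun hcocycle (DirectSum.lof ℤ _ _ (δ.eraseSed Φ hr) y)
  rw [coder_apply_lof, Finset.sum_eq_single_of_mem δ (Finset.mem_univ δ), dif_pos hadj] at hd
  · rcases td.ε_unit q δ _ hadj with hε | hε <;> simpa [hε] using hd
  · intro γ _ hγδ
    split_ifs with hγ
    · rw [hsupp γ (fun hrγ => hγδ (FaceIdx.eq_of_adj_eraseSed Φ hr hγ hrγ)), smul_zero]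
    · rfl

end UFan

theorem positive_sedentarity_vanishing_general {n : ℕ} (Φ : UFan n) (td : TropData Φ)
    (ζ : Finset Φ.R) (hζne : ζ ≠ ∅)
    (p q : ℕ) (c : Φ.Cco p q)
    (hcocycle : Φ.coder td p q c = 0)
    (hsupp : ∀ δ : Φ.FaceIdx q, ¬ ζ ⊆ δ.1.1 →
      ∀ x : ↥(Φ.Fmod p δ.1.1 δ.1.2),
        c (DirectSum.lof ℤ (Φ.FaceIdx q) (fun γ => ↥(Φ.Fmod p γ.1.1 γ.1.2)) δ x) = 0) :
    c = 0 := by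
  obtain ⟨r, hr⟩ := Finset.nonempty_iff_ne_empty.2 hζne
  exact Φ.eq_zero_of_coder_eq_zero_of_vanishing_off_ray td p q c hcocycle r
    fun γ hrγ => hsupp γ fun hζγ => hrγ (hζγ hr)

/-- positive-sedentarity-vanishing lemma: let `Φ` be a unimodular
fan, `ζ` a nonzero cone of `Φ`, and `c ∈ C^{p,q}(Φ̄)` a tropical cocycle (`dc = 0`)
supported on the faces lying in the stratum at infinity of `ζ`, i.e. whose
sedentarity contains `ζ`.  Then `c = 0`. -/
theorem positive_sedentarity_vanishing {n : ℕ} (Φ : UFan n) (td : TropData Φ)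
    (ζ : Finset Φ.R) (hζ : ζ ∈ Φ.faces) (hζne : ζ ≠ ∅)
    (p q : ℕ) (c : Φ.Cco p q)
    (hcocycle : Φ.coder td p q c = 0)
    (hsupp : ∀ δ : Φ.FaceIdx q, ¬ ζ ⊆ δ.1.1 →
      ∀ x : ↥(Φ.Fmod p δ.1.1 δ.1.2),
        c (DirectSum.lof ℤ (Φ.FaceIdx q) (fun γ => ↥(Φ.Fmod p γ.1.1 γ.1.2)) δ x) = 0) :
    c = 0 :=
  positive_sedentarity_vanishing_general Φ td ζ hζne p q c hcocycle hsupp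
end

section
/- Let C be a closed convex subset of ℝⁿ × ℝ containing the origin and containing {0} × ℝ₊, with C positively generated by finitely many rays. If C contains no point of {0} × ℝ_{<0} and no supporting hyperplane of C at 0 separating {0}×ℝ_{<0} from C contains a nonzero linear subspace generated positively by rays of C, then there is a supporting hyperplane H of C at 0 with H ∩ C = {0}, separating {0} × ℝ_{<0} from C. Consequently, for a complete simplicial rational fan Σ in ℝⁿ and a conewise linear function f: Σ → ℝ, if the pairing of the class of f with every nonzero effective Minkowski weight of dimension one on Σ is positive, i.e., Σ_ρ c_ρ f(e_ρ) > 0 for all nonzero balanced families (c_ρ)_{ρ ∈ Σ_1} of nonnegative rationals with Σ_ρ c_ρ e_ρ = 0, then f is strictly convex at the zero cone, meaning there is a linear function λ with f − λ vanishing at 0 and strictly positive on Σ_1 ∖ {0}. -/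
open scoped NNReal

/-- The inclusion of the lattice `ℤⁿ` into `ℝⁿ`. -/
noncomputable def lattMap (n : ℕ) : NZ n →ₗ[ℤ] NR n :=
  LinearMap.pi fun j => (Algebra.linearMap ℤ ℝ).comp (LinearMap.proj j)

/-- The inclusion of `ℤⁿ` into `ℚⁿ`. -/
noncomputable def lattQMap (n : ℕ) : NZ n →ₗ[ℤ] (Fin n → ℚ) :=
  LinearMap.pi fun j => (Algebra.linearMap ℤ ℚ).comp (LinearMap.proj j)

open Topology

set_option linter.unusedSectionVars false
set_option linter.unusedVariables false
set_option maxHeartbeats 1000000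

abbrev EE (n : ℕ) := (Fin n → ℝ) × ℝ

def qr {R : Type} (q : R → ℚ) : R → ℝ := fun r => (q r : ℝ)

section QR
variable {R : Type} [Fintype R] {R' : Type} [Fintype R']

/-- cast preserves linear independence -/
lemma qr_linearIndependent {d : ℕ} {w : Fin d → (R → ℚ)}
    (hw : LinearIndependent ℚ w) : LinearIndependent ℝ (fun i => qr (w i)) := by
  classical
  rw [Fintype.linearIndependent_iff] at hw ⊢
  intro t ht
  set M : Matrix R (Fin d) ℚ := Matrix.of (fun r i => w i r) with hM
  have hinj : Function.Injective (Matrix.mulVecLin M) := by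
    rw [← LinearMap.ker_eq_bot, LinearMap.ker_eq_bot']
    intro u hu
    funext i
    refine hw u ?_ i
    funext r
    have := congrFun hu r
    simpa [Matrix.mulVecLin, Matrix.mulVec, dotProduct, hM, mul_comm,
      Finset.sum_apply] using this
  obtain ⟨g, hg⟩ := (Matrix.mulVecLin M).exists_leftInverse_of_injective
    (LinearMap.ker_eq_bot.2 hinj)
  set N : Matrix (Fin d) R ℚ := LinearMap.toMatrix' g with hN
  have hNM : N * M = 1 := by
    have : LinearMap.toMatrix' (g.comp (Matrix.mulVecLin M))
        = LinearMap.toMatrix' (LinearMap.id (M := Fin d → ℚ)) := by rw [hg]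
    rw [LinearMap.toMatrix'_comp, LinearMap.toMatrix'_id] at this
    rwa [hN, show M = LinearMap.toMatrix' M.mulVecLin from (LinearMap.toMatrix'_toLin' M).symm]
  -- cast to ℝ
  have hNMr : (N.map (Rat.castHom ℝ)) * (M.map (Rat.castHom ℝ)) = 1 := by
    rw [← Matrix.map_mul, hNM, Matrix.map_one] <;> simp
  have hMt : (M.map (Rat.castHom ℝ)).mulVec t = 0 := by
    funext r
    have := congrFun ht r
    simpa [Matrix.mulVec, dotProduct, hM, qr, mul_comm, Finset.sum_apply] using this
  intro i
  have : t = 0 := by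
    calc t = (1 : Matrix (Fin d) (Fin d) ℝ).mulVec t := by rw [Matrix.one_mulVec]
    _ = ((N.map (Rat.castHom ℝ)) * (M.map (Rat.castHom ℝ))).mulVec t := by rw [hNMr]
    _ = (N.map (Rat.castHom ℝ)).mulVec ((M.map (Rat.castHom ℝ)).mulVec t) := by
        rw [Matrix.mulVec_mulVec]
    _ = 0 := by rw [hMt, Matrix.mulVec_zero]
  simp [this]

def qrHom {R : Type} : (R → ℚ) →+ (R → ℝ) where
  toFun := qr
  map_zero' := by funext r; simp [qr]
  map_add' := fun a b => by funext r; simp [qr]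

lemma qr_smul (c : ℚ) (a : R → ℚ) : qr (c • a) = (c : ℝ) • qr a := by
  funext r; simp [qr]

/-- base change for kernels of rational linear maps -/
lemma ker_cast (A : (R → ℚ) →ₗ[ℚ] (R' → ℚ)) (B : (R → ℝ) →ₗ[ℝ] (R' → ℝ))
    (hcompat : ∀ q : R → ℚ, B (qr q) = qr (A q)) (c : R → ℝ) (hc : B c = 0) :
    c ∈ Submodule.span ℝ (qr '' {q | A q = 0}) := by
  classical
  set d := Module.finrank ℚ (LinearMap.ker A) with hd
  let b : Module.Basis (Fin d) ℚ (LinearMap.ker A) := Module.finBasis ℚ _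
  set w : Fin d → (R → ℚ) := fun i => ((b i : LinearMap.ker A) : R → ℚ) with hw
  have hwind : LinearIndependent ℚ w :=
    b.linearIndependent.map' (LinearMap.ker A).subtype (Submodule.ker_subtype _)
  have hker : ∀ i, A (w i) = 0 := fun i => (b i).2
  have span_eq : Submodule.span ℝ (qr '' {q | A q = 0})
      = Submodule.span ℝ (Set.range fun i => qr (w i)) := by
    apply le_antisymm
    · rw [Submodule.span_le]
      rintro x ⟨q, hq, rfl⟩
      have hrepr : q = ∑ i, b.repr ⟨q, hq⟩ i • w i := by
        have := b.sum_repr ⟨q, hq⟩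
        have := congrArg ((LinearMap.ker A).subtype) this
        simp only [map_sum, map_smul] at this
        exact this.symm
      rw [hrepr]
      have : qr (∑ i, b.repr ⟨q, hq⟩ i • w i) = ∑ i, ((b.repr ⟨q, hq⟩ i : ℝ)) • qr (w i) := by
        rw [show qr (∑ i, b.repr ⟨q, hq⟩ i • w i) = qrHom (∑ i, b.repr ⟨q, hq⟩ i • w i) from rfl,
          map_sum]
        exact Finset.sum_congr rfl fun i _ => qr_smul _ _
      rw [this]
      exact Submodule.sum_mem _ fun i _ => Submodule.smul_mem _ _
        (Submodule.subset_span ⟨i, rfl⟩)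
    · exact Submodule.span_mono (by rintro x ⟨i, rfl⟩; exact ⟨w i, hker i, rfl⟩)
  have hspan_rank : Module.finrank ℝ (Submodule.span ℝ (Set.range fun i => qr (w i))) = d := by
    rw [finrank_span_eq_card (qr_linearIndependent hwind), Fintype.card_fin]
  have hle : Submodule.span ℝ (qr '' {q | A q = 0}) ≤ LinearMap.ker B := by
    rw [Submodule.span_le]
    rintro x ⟨q, hq, rfl⟩
    simp only [SetLike.mem_coe, LinearMap.mem_ker, hcompat q]
    rw [show A q = 0 from hq]
    exact map_zero (qrHom (R := R'))
  -- rank counting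
  have hQ : Module.finrank ℚ (LinearMap.range A) + d = Fintype.card R := by
    have := LinearMap.finrank_range_add_finrank_ker A
    rwa [Module.finrank_pi] at this
  have hR : Module.finrank ℝ (LinearMap.range B) + Module.finrank ℝ (LinearMap.ker B)
      = Fintype.card R := by
    have := LinearMap.finrank_range_add_finrank_ker B
    rwa [Module.finrank_pi] at this
  have hrange : Module.finrank ℚ (LinearMap.range A) ≤ Module.finrank ℝ (LinearMap.range B) := by
    set rk := Module.finrank ℚ (LinearMap.range A) with hrk
    let u : Module.Basis (Fin rk) ℚ (LinearMap.range A) := Module.finBasis ℚ _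
    have hu : ∀ i, ∃ p : R → ℚ, A p = (u i : R' → ℚ) := fun i => (u i).2
    choose p hp using hu
    have huind : LinearIndependent ℚ (fun i => ((u i : LinearMap.range A) : R' → ℚ)) :=
      u.linearIndependent.map' (LinearMap.range A).subtype (Submodule.ker_subtype _)
    have hind : LinearIndependent ℝ (fun i => qr ((u i : LinearMap.range A) : R' → ℚ)) :=
      qr_linearIndependent huind
    have hmem : ∀ i, qr ((u i : LinearMap.range A) : R' → ℚ) ∈ LinearMap.range B := by
      intro i
      exact ⟨qr (p i), by rw [hcompat, hp]⟩
    let v' : Fin rk → LinearMap.range B := fun i => ⟨_, hmem i⟩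
    have hv' : LinearIndependent ℝ v' := by
      apply LinearIndependent.of_comp (LinearMap.range B).subtype
      exact hind
    have := hv'.fintype_card_le_finrank
    simpa using this
  have hkerB : Module.finrank ℝ (LinearMap.ker B) ≤ d := by omega
  have : Submodule.span ℝ (qr '' {q | A q = 0}) = LinearMap.ker B := by
    apply Submodule.eq_of_le_of_finrank_le hle
    rw [span_eq, hspan_rank]
    exact hkerB
  rw [this]
  exact hc

end QR

lemma dense_rational_point {R : Type} [Fintype R] {k : ℕ} (q : Fin k → (R → ℚ))
    (U : Set (R → ℝ)) (hU : IsOpen U) (t : Fin k → ℝ)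
    (ht : (∑ i, t i • qr (q i)) ∈ U) :
    ∃ s : Fin k → ℚ, qr (∑ i, s i • q i) ∈ U := by
  have hF : Continuous (fun t : Fin k → ℝ => ∑ i, t i • qr (q i)) :=
    continuous_finset_sum _ fun i _ => (continuous_apply i).smul continuous_const
  have hopen : IsOpen ((fun t : Fin k → ℝ => ∑ i, t i • qr (q i)) ⁻¹' U) := hU.preimage hF
  have hdense : Dense (Set.pi Set.univ fun _ : Fin k => Set.range ((↑) : ℚ → ℝ)) :=
    dense_pi Set.univ fun i _ => Rat.denseRange_cast
  obtain ⟨x, hx1, hx2⟩ := hdense.exists_mem_open hopen ⟨t, ht⟩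
  choose s hs using fun i => hx1 i (Set.mem_univ i)
  refine ⟨s, ?_⟩
  have hxx : qr (∑ i, s i • q i) = ∑ i, x i • qr (q i) := by
    funext r
    simp only [qr, Finset.sum_apply, Pi.smul_apply, smul_eq_mul]
    push_cast
    exact Finset.sum_congr rfl fun i _ => by rw [hs i]
  rw [hxx]
  exact hx2

section Decomp
variable {R : Type} [Fintype R] {n : ℕ}

/-- constraint map over a field -/
noncomputable def Amap {K : Type} [Field K] [DecidableEq R] (ev : R → (Fin n → K)) (S : Finset R) :
    (R → K) →ₗ[K] ((Fin n ⊕ R) → K) :=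
  LinearMap.pi fun x => Sum.elim
    (fun j => ∑ r : R, ev r j • (LinearMap.proj r : (R → K) →ₗ[K] K))
    (fun i => if i ∈ S then 0 else (LinearMap.proj i : (R → K) →ₗ[K] K)) x

lemma Amap_inl {K : Type} [Field K] [DecidableEq R] (ev : R → (Fin n → K)) (S : Finset R)
    (q : R → K) (j : Fin n) : Amap ev S q (Sum.inl j) = ∑ r : R, ev r j * q r := by
  simp [Amap, LinearMap.pi_apply, LinearMap.sum_apply, smul_eq_mul]

lemma Amap_inr {K : Type} [Field K] [DecidableEq R] (ev : R → (Fin n → K)) (S : Finset R)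
    (q : R → K) (i : R) : Amap ev S q (Sum.inr i) = if i ∈ S then 0 else q i := by
  by_cases h : i ∈ S <;> simp [Amap, LinearMap.pi_apply, h]

lemma cone_decomp (eq : R → (Fin n → ℚ)) (er : R → (Fin n → ℝ))
    (her : ∀ r j, er r j = (eq r j : ℝ)) :
    ∀ (m : ℕ) (c : R → ℝ), (Finset.univ.filter fun r => c r ≠ 0).card ≤ m →
      (∀ r, 0 ≤ c r) → (∑ r, c r • er r) = 0 →
      ∃ (k : ℕ) (t : Fin k → ℝ) (q : Fin k → (R → ℚ)),
        (∀ j, 0 ≤ t j) ∧ (∀ j, (∀ r, 0 ≤ q j r) ∧ (∑ r, q j r • eq r) = 0) ∧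
        (∀ r, c r = ∑ j, t j * (q j r : ℝ)) := by
  classical
  intro m
  induction m with
  | zero =>
    intro c hcard hpos hsum
    refine ⟨0, Fin.elim0, Fin.elim0, fun j => j.elim0, fun j => j.elim0, fun r => ?_⟩
    have : c r = 0 := by
      by_contra h
      have : r ∈ Finset.univ.filter fun r => c r ≠ 0 := by simp [h]
      have := Finset.card_pos.2 ⟨r, this⟩
      omega
    simp [this]
  | succ m ih =>
    intro c hcard hpos hsum
    set S := Finset.univ.filter fun r => c r ≠ 0 with hSdef
    by_cases hS : S = ∅
    · exact ih c (by rw [← hSdef, hS]; simp) hpos hsum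
    -- main case
    have hSne : S.Nonempty := Finset.nonempty_iff_ne_empty.2 hS
    have hcS : ∀ r ∈ S, 0 < c r := fun r hr => by
      have : c r ≠ 0 := by simpa [hSdef] using hr
      exact lt_of_le_of_ne (hpos r) (Ne.symm this)
    have hcnotS : ∀ r, r ∉ S → c r = 0 := fun r hr => by
      by_contra h; exact hr (by simp [hSdef, h])
    -- the constraint maps
    set A := Amap eq S with hA
    set B := Amap er S with hB
    have hcompat : ∀ q : R → ℚ, B (qr q) = qr (A q) := by
      intro q; funext x
      cases x with
      | inl j =>
        rw [hB, hA, Amap_inl]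
        show _ = ((Amap eq S q (Sum.inl j) : ℚ) : ℝ)
        rw [Amap_inl]
        push_cast
        exact Finset.sum_congr rfl fun r _ => by rw [her]; rfl
      | inr i =>
        rw [hB, hA, Amap_inr]
        show _ = ((Amap eq S q (Sum.inr i) : ℚ) : ℝ)
        rw [Amap_inr]
        by_cases h : i ∈ S <;> simp [h, qr]
    have hcB : B c = 0 := by
      funext x
      cases x with
      | inl j =>
        rw [hB, Amap_inl]
        have := congrFun hsum j
        simpa [Finset.sum_apply, mul_comm] using this
      | inr i =>
        rw [hB, Amap_inr]
        by_cases h : i ∈ S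
        · simp [h]
        · simp [h, hcnotS i h]
    have hcspan := ker_cast A B hcompat c hcB
    rw [Submodule.mem_span_set'] at hcspan
    obtain ⟨k, t0, g, hg⟩ := hcspan
    have hgq : ∀ i : Fin k, ∃ q : R → ℚ, A q = 0 ∧ qr q = (g i : R → ℝ) := by
      intro i
      obtain ⟨q, hq1, hq2⟩ := (g i).2
      exact ⟨q, hq1, hq2⟩
    choose q0 hq0A hq0qr using hgq
    -- the open positivity condition
    set U : Set (R → ℝ) := {x | ∀ r ∈ S, 0 < x r} with hU
    have hUopen : IsOpen U := by
      have : U = ⋂ r ∈ S, {x : R → ℝ | 0 < x r} := by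
        ext x; simp [hU]
      rw [this]
      exact isOpen_biInter_finset fun r _ =>
        isOpen_lt continuous_const (continuous_apply r)
    have hcU : (∑ i, t0 i • qr (q0 i)) ∈ U := by
      have : (∑ i, t0 i • qr (q0 i)) = c := by
        rw [← hg]; exact Finset.sum_congr rfl fun i _ => by rw [hq0qr]
      rw [this]
      exact fun r hr => hcS r hr
    obtain ⟨s, hsU⟩ := dense_rational_point q0 U hUopen t0 hcU
    set Q : R → ℚ := ∑ i, s i • q0 i with hQ
    have hQA : A Q = 0 := by
      rw [hQ, map_sum]
      refine Finset.sum_eq_zero fun i _ => ?_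
      rw [map_smul, hq0A, smul_zero]
    have hQpos : ∀ r ∈ S, 0 < Q r := by
      intro r hr
      have := hsU r hr
      rwa [show ((qr Q) r : ℝ) = ((Q r : ℚ) : ℝ) from rfl, Rat.cast_pos] at this
    have hQnotS : ∀ r, r ∉ S → Q r = 0 := by
      intro r hr
      have := congrFun hQA (Sum.inr r)
      rw [Amap_inr] at this
      simpa [hr] using this
    have hQ0 : ∀ r, 0 ≤ Q r := fun r => by
      by_cases h : r ∈ S
      · exact (hQpos r h).le
      · rw [hQnotS r h]
    have hQsum : (∑ r, Q r • eq r) = 0 := by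
      funext j
      have := congrFun hQA (Sum.inl j)
      rw [Amap_inl] at this
      simpa [Finset.sum_apply, mul_comm] using this
    -- minimum ratio
    obtain ⟨r₀, hr₀S, hr₀min⟩ := Finset.exists_min_image S (fun r => c r / (Q r : ℝ)) hSne
    set tstar : ℝ := c r₀ / (Q r₀ : ℝ) with htstar
    have hQr₀ : (0:ℝ) < (Q r₀ : ℝ) := by exact_mod_cast hQpos r₀ hr₀S
    have htstar0 : 0 < tstar := div_pos (hcS r₀ hr₀S) hQr₀
    set c' : R → ℝ := fun r => c r - tstar * (Q r : ℝ) with hc'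
    have hc'0 : ∀ r, 0 ≤ c' r := by
      intro r
      by_cases h : r ∈ S
      · have hQr : (0:ℝ) < (Q r : ℝ) := by exact_mod_cast hQpos r h
        have hmin := hr₀min r h
        have hle : tstar * (Q r : ℝ) ≤ c r := by
          rw [← le_div_iff₀ hQr]; exact hmin
        show 0 ≤ c r - tstar * (Q r : ℝ)
        linarith
      · show 0 ≤ c r - tstar * (Q r : ℝ)
        rw [hcnotS r h, hQnotS r h]; simp
    have hc'r₀ : c' r₀ = 0 := by
      show c r₀ - tstar * (Q r₀ : ℝ) = 0
      rw [htstar, div_mul_cancel₀ _ (ne_of_gt hQr₀), sub_self]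
    have hQrsum : (∑ r, (Q r : ℝ) • er r) = 0 := by
      funext j
      rw [Finset.sum_apply]
      have := congrFun hQsum j
      rw [Finset.sum_apply] at this
      have : ((∑ r, (Q r • eq r) j : ℚ) : ℝ) = 0 := by rw [this]; simp
      push_cast at this
      simpa [her, smul_eq_mul] using this
    have hsum' : (∑ r, c' r • er r) = 0 := by
      have expand : (∑ r, c' r • er r)
          = (∑ r, c r • er r) - tstar • (∑ r, (Q r : ℝ) • er r) := by
        rw [Finset.smul_sum, ← Finset.sum_sub_distrib]
        refine Finset.sum_congr rfl fun r _ => ?_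
        show (c r - tstar * (Q r : ℝ)) • er r = _
        rw [sub_smul, smul_smul]
      rw [expand, hsum, hQrsum, smul_zero, sub_zero]
    have hcard' : (Finset.univ.filter fun r => c' r ≠ 0).card ≤ m := by
      have hsubset : (Finset.univ.filter fun r => c' r ≠ 0) ⊆ S.erase r₀ := by
        intro r hr
        simp only [Finset.mem_filter] at hr
        refine Finset.mem_erase.2 ⟨?_, ?_⟩
        · rintro rfl; exact hr.2 hc'r₀
        · by_contra h
          refine hr.2 ?_
          show c r - tstar * (Q r : ℝ) = 0
          rw [hcnotS r h, hQnotS r h]; simp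
      have h1 := Finset.card_le_card hsubset
      have h2 := Finset.card_erase_of_mem hr₀S
      have h3 : 1 ≤ S.card := Finset.card_pos.2 hSne
      omega
    obtain ⟨k', t', q', ht'0, hq', hrep'⟩ := ih c' hcard' hc'0 hsum'
    refine ⟨k' + 1, Fin.cons tstar t', Fin.cons Q q', ?_, ?_, ?_⟩
    · intro j
      refine Fin.cases ?_ ?_ j
      · rw [Fin.cons_zero]; exact htstar0.le
      · intro i; rw [Fin.cons_succ]; exact ht'0 i
    · intro j
      refine Fin.cases ?_ ?_ j
      · rw [Fin.cons_zero]; exact ⟨hQ0, hQsum⟩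
      · intro i; rw [Fin.cons_succ]; exact hq' i
    · intro r
      rw [Fin.sum_univ_succ]
      simp only [Fin.cons_zero, Fin.cons_succ]
      have h5 : c r - tstar * (Q r : ℝ) = ∑ j, t' j * (q' j r : ℝ) := hrep' r
      linarith

lemma posOnReal (eq : R → (Fin n → ℚ)) (er : R → Fin n → ℝ)
    (her : ∀ r j, er r j = (eq r j : ℝ)) (f : R → ℝ)
    (hpos : ∀ c : R → ℚ, (∀ r, 0 ≤ c r) → (∑ r, c r • eq r) = 0 → c ≠ 0 →
      0 < ∑ r, (c r : ℝ) * f r)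
    (c : R → ℝ) (hc0 : ∀ r, 0 ≤ c r) (hcsum : (∑ r, c r • er r) = 0) (hcne : c ≠ 0) :
    0 < ∑ r, c r * f r := by
  obtain ⟨k, t, q, ht0, hq, hrep⟩ := cone_decomp eq er her _ c le_rfl hc0 hcsum
  have key : ∑ r, c r * f r = ∑ j, t j * ∑ r, (q j r : ℝ) * f r := by
    have : ∀ r, c r * f r = ∑ j, t j * ((q j r : ℝ) * f r) := by
      intro r
      rw [hrep r, Finset.sum_mul]
      exact Finset.sum_congr rfl fun j _ => by ring
    rw [Finset.sum_congr rfl fun r _ => this r, Finset.sum_comm]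
    exact Finset.sum_congr rfl fun j _ => by rw [Finset.mul_sum]
  rw [key]
  have hterm : ∀ j ∈ Finset.univ, 0 ≤ t j * ∑ r, (q j r : ℝ) * f r := by
    intro j _
    by_cases h : q j = 0
    · simp [h]
    · exact mul_nonneg (ht0 j) (le_of_lt (hpos (q j) (hq j).1 (hq j).2 h))
  have hex : ∃ j ∈ Finset.univ, 0 < t j * ∑ r, (q j r : ℝ) * f r := by
    by_contra h
    push_neg at h
    apply hcne
    funext r
    rw [hrep r]
    refine Finset.sum_eq_zero fun j _ => ?_
    by_cases hqj : q j = 0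
    · simp [hqj]
    · have h1 := hpos (q j) (hq j).1 (hq j).2 hqj
      have h2 := h j (Finset.mem_univ j)
      have h3 : t j = 0 := by
        rcases lt_or_eq_of_le (ht0 j) with h4 | h4
        · exact absurd (mul_pos h4 h1) (not_lt.2 h2)
        · exact h4.symm
      rw [h3, zero_mul]
  exact Finset.sum_pos' hterm hex


section Cone
variable {E : Type*} [NormedAddCommGroup E] [NormedSpace ℝ E] [FiniteDimensional ℝ E]

lemma nnsmul_eq (a : ℝ≥0) (x : E) : a • x = (a : ℝ) • x := rfl

lemma toNN_smul {a : ℝ} (ha : 0 ≤ a) (x : E) : a.toNNReal • x = a • x := by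
  rw [nnsmul_eq, Real.coe_toNNReal _ ha]

/-- Carathéodory for finitely generated cones -/
lemma cone_cara :
    ∀ (m : ℕ) (s : Finset E), s.card ≤ m → ∀ x ∈ Submodule.span ℝ≥0 (s : Set E),
      ∃ t ⊆ s, (LinearIndependent ℝ ((↑) : ↑t → E)) ∧ x ∈ Submodule.span ℝ≥0 (t : Set E) := by
  classical
  intro m
  induction m with
  | zero =>
    intro s hcard x hx
    have : s = ∅ := Finset.card_eq_zero.1 (le_antisymm hcard (Nat.zero_le _))
    subst this
    refine ⟨∅, subset_rfl, ?_, hx⟩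
    exact linearIndependent_empty_type
  | succ m ih =>
    intro s hcard x hx
    obtain ⟨f, -, hf⟩ := Submodule.mem_span_finset.1 hx
    by_cases hzero : ∃ g ∈ s, f g = 0
    · obtain ⟨g, hgs, hfg⟩ := hzero
      have hx' : x ∈ Submodule.span ℝ≥0 ((s.erase g : Finset E) : Set E) := by
        rw [← hf, ← Finset.sum_erase s (by rw [hfg, zero_smul])]
        exact Submodule.sum_mem _ fun h hh => Submodule.smul_mem _ _
          (Submodule.subset_span hh)
      obtain ⟨t, hts, hind, hxt⟩ := ih (s.erase g)
        (by have := Finset.card_erase_of_mem hgs; have := Finset.card_pos.2 ⟨g, hgs⟩; omega) x hx'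
      exact ⟨t, hts.trans (Finset.erase_subset _ _), hind, hxt⟩
    push_neg at hzero
    by_cases hind : LinearIndependent ℝ ((↑) : ↑s → E)
    · exact ⟨s, subset_rfl, hind, hx⟩
    obtain ⟨lam0, hlam0sum, i₀, hi₀⟩ := Fintype.not_linearIndependent_iff.1 hind
    -- get a relation with a positive coefficient
    obtain ⟨lam, hlamsum, i₁, hi₁⟩ :
        ∃ lam : ↑s → ℝ, (∑ i, lam i • (i : E)) = 0 ∧ ∃ i, 0 < lam i := by
      rcases lt_or_gt_of_ne hi₀ with h | h
      · refine ⟨-lam0, ?_, i₀, by simpa using h⟩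
        simp only [Pi.neg_apply, neg_smul, Finset.sum_neg_distrib, hlam0sum, neg_zero]
      · exact ⟨lam0, hlam0sum, i₀, h⟩
    set P := Finset.univ.filter (fun i : ↑s => 0 < lam i) with hP
    have hPne : P.Nonempty := ⟨i₁, by simp [hP, hi₁]⟩
    obtain ⟨i₂, hi₂P, hi₂min⟩ := Finset.exists_min_image P (fun i => (f (i : E) : ℝ) / lam i) hPne
    have hlami₂ : 0 < lam i₂ := by simpa [hP] using hi₂P
    set mu : ℝ := (f (i₂ : E) : ℝ) / lam i₂ with hmu
    have hmu0 : 0 ≤ mu := div_nonneg (f _).coe_nonneg hlami₂.le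
    set F : ↑s → ℝ := fun i => (f (i : E) : ℝ) - mu * lam i with hF
    have hF0 : ∀ i, 0 ≤ F i := by
      intro i
      show 0 ≤ (f (i : E) : ℝ) - mu * lam i
      rcases le_or_gt (lam i) 0 with h | h
      · have h1 : (0:ℝ) ≤ (f (i : E) : ℝ) := (f (i : E)).coe_nonneg
        have h2 : mu * lam i ≤ 0 := mul_nonpos_of_nonneg_of_nonpos hmu0 h
        linarith
      · have hiP : i ∈ P := by simp [hP, h]
        have hle : mu ≤ (f (i : E) : ℝ) / lam i := hi₂min i hiP
        have : mu * lam i ≤ (f (i : E) : ℝ) := by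
          rw [← le_div_iff₀ h]; exact hle
        linarith
    have hFi₂ : F i₂ = 0 := by
      show (f (i₂ : E) : ℝ) - mu * lam i₂ = 0
      rw [hmu, div_mul_cancel₀ _ (ne_of_gt hlami₂), sub_self]
    have hxsum : (∑ i : ↑s, F i • (i : E)) = x := by
      have h1 : (∑ i : ↑s, F i • (i : E))
          = (∑ i : ↑s, (f (i : E) : ℝ) • (i : E)) - mu • (∑ i : ↑s, lam i • (i : E)) := by
        rw [Finset.smul_sum, ← Finset.sum_sub_distrib]
        refine Finset.sum_congr rfl fun i _ => ?_
        show ((f (i : E) : ℝ) - mu * lam i) • (i : E) = _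
        rw [sub_smul, smul_smul]
      rw [h1, hlamsum, smul_zero, sub_zero, ← hf]
      rw [← Finset.sum_attach s (fun g => f g • g)]
      rfl
    have hx' : x ∈ Submodule.span ℝ≥0 ((s.erase (i₂ : E) : Finset E) : Set E) := by
      rw [← hxsum, ← Finset.sum_erase Finset.univ (by rw [hFi₂, zero_smul])]
      refine Submodule.sum_mem _ fun i hi => ?_
      have hine : (i : E) ≠ (i₂ : E) := by
        intro h
        exact (Finset.mem_erase.1 hi).1 (Subtype.ext h)
      rw [← toNN_smul (hF0 i)]
      exact Submodule.smul_mem _ _ (Submodule.subset_span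
        (Finset.mem_erase.2 ⟨hine, i.2⟩))
    obtain ⟨t, hts, hind', hxt⟩ := ih (s.erase (i₂ : E))
      (by have := Finset.card_erase_of_mem i₂.2; have := Finset.card_pos.2 ⟨_, i₂.2⟩; omega) x hx'
    exact ⟨t, hts.trans (Finset.erase_subset _ _), hind', hxt⟩

/-- the cone over a linearly independent finite set is closed -/
lemma cone_indep_closed (t : Finset E) (hind : LinearIndependent ℝ ((↑) : ↑t → E)) :
    IsClosed ((Submodule.span ℝ≥0 (t : Set E) : Submodule ℝ≥0 E) : Set E) := by
  classical
  set L : (↑t → ℝ) →ₗ[ℝ] E :=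
    ∑ i : ↑t, (LinearMap.proj i : (↑t → ℝ) →ₗ[ℝ] ℝ).smulRight (i : E) with hL
  have hLapp : ∀ u, L u = ∑ i : ↑t, u i • (i : E) := by
    intro u
    rw [hL, LinearMap.sum_apply]
    exact Finset.sum_congr rfl fun i _ => rfl
  have hker : LinearMap.ker L = ⊥ := by
    rw [LinearMap.ker_eq_bot']
    intro u hu
    rw [hLapp] at hu
    funext i
    exact Fintype.linearIndependent_iff.1 hind u hu i
  have hemb : IsClosedEmbedding L := LinearMap.isClosedEmbedding_of_injective hker
  set K : Set (↑t → ℝ) := {u | ∀ i, 0 ≤ u i} with hK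
  have hKclosed : IsClosed K := by
    have : K = ⋂ i, {u : ↑t → ℝ | 0 ≤ u i} := by ext u; simp [hK]
    rw [this]
    exact isClosed_iInter fun i => isClosed_le continuous_const (continuous_apply i)
  have himage : ((Submodule.span ℝ≥0 (t : Set E) : Submodule ℝ≥0 E) : Set E) = L '' K := by
    ext x
    constructor
    · intro hx
      obtain ⟨f, -, hf⟩ := Submodule.mem_span_finset.1 hx
      refine ⟨fun i => (f (i : E) : ℝ), fun i => (f _).coe_nonneg, ?_⟩
      rw [hLapp, ← hf, ← Finset.sum_attach t (fun g => f g • g)]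
      rfl
    · rintro ⟨u, hu, rfl⟩
      rw [hLapp]
      refine Submodule.sum_mem _ fun i _ => ?_
      rw [← toNN_smul (hu i)]
      exact Submodule.smul_mem _ _ (Submodule.subset_span i.2)
  rw [himage]
  exact hemb.isClosedMap K hKclosed

/-- finitely generated cones are closed -/
lemma cone_closed (G : Finset E) :
    IsClosed ((Submodule.span ℝ≥0 (G : Set E) : Submodule ℝ≥0 E) : Set E) := by
  classical
  have hunion : ((Submodule.span ℝ≥0 (G : Set E) : Submodule ℝ≥0 E) : Set E)
      = ⋃ t ∈ (G.powerset.filter (fun t : Finset E => LinearIndependent ℝ ((↑) : ↑t → E))),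
        ((Submodule.span ℝ≥0 ((t : Finset E) : Set E) : Submodule ℝ≥0 E) : Set E) := by
    ext x
    simp only [Set.mem_iUnion, Finset.mem_filter, Finset.mem_powerset, SetLike.mem_coe]
    constructor
    · intro hx
      obtain ⟨t, hts, hind, hxt⟩ := cone_cara G.card G le_rfl x hx
      exact ⟨t, ⟨hts, hind⟩, hxt⟩
    · rintro ⟨t, ⟨hts, _⟩, hxt⟩
      exact Submodule.span_mono (by exact_mod_cast hts) hxt
  rw [hunion]
  refine Set.Finite.isClosed_biUnion (Finset.finite_toSet _) fun t ht => ?_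
  exact cone_indep_closed t (by simpa using (Finset.mem_filter.1 ht).2)

/-- separation of a point from a finitely generated cone -/
lemma cone_sep (G : Finset E) (y : E) (hy : y ∉ Submodule.span ℝ≥0 (G : Set E)) :
    ∃ φ : E →ₗ[ℝ] ℝ, (∀ x ∈ Submodule.span ℝ≥0 (G : Set E), 0 ≤ φ x) ∧ φ y < 0 := by
  set C := Submodule.span ℝ≥0 (G : Set E) with hC
  have hconv : Convex ℝ (C : Set E) := by
    intro x hx z hz a b ha hb hab
    refine Submodule.add_mem _ ?_ ?_
    · rw [← toNN_smul ha]; exact Submodule.smul_mem _ _ hx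
    · rw [← toNN_smul hb]; exact Submodule.smul_mem _ _ hz
  obtain ⟨f, u, hfu, huy⟩ := geometric_hahn_banach_closed_point hconv (cone_closed G) hy
  have hu0 : 0 < u := by
    have := hfu 0 (Submodule.zero_mem C)
    simpa using this
  have hfnonpos : ∀ x ∈ C, f x ≤ 0 := by
    intro x hx
    by_contra h
    push_neg at h
    have ht : 0 ≤ (u + 1) / f x := div_nonneg (by linarith) h.le
    have hmem : ((u + 1) / f x) • x ∈ C := by
      rw [← toNN_smul ht]; exact Submodule.smul_mem _ _ hx
    have := hfu _ hmem
    rw [map_smul, smul_eq_mul, div_mul_cancel₀ _ (ne_of_gt h)] at this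
    linarith
  refine ⟨-(f : E →ₗ[ℝ] ℝ), fun x hx => ?_, ?_⟩
  · simpa using hfnonpos x hx
  · simp only [LinearMap.neg_apply, ContinuousLinearMap.coe_coe]
    linarith

end Cone


section Cone2
variable {E : Type*} [NormedAddCommGroup E] [NormedSpace ℝ E] [FiniteDimensional ℝ E]

lemma neg_mem_span_symm {s : Set E} (hs : ∀ v ∈ s, -v ∈ s) {x : E}
    (hx : x ∈ Submodule.span ℝ≥0 s) : -x ∈ Submodule.span ℝ≥0 s := by
  induction hx using Submodule.span_induction with
  | mem v hv => exact Submodule.subset_span (hs v hv)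
  | zero => rw [neg_zero]; exact Submodule.zero_mem _
  | add a b _ _ ha hb => rw [neg_add]; exact Submodule.add_mem _ ha hb
  | smul a v _ hv => rw [← smul_neg]; exact Submodule.smul_mem _ _ hv

lemma real_span_subset {s : Set E} {x : E} (hx : x ∈ Submodule.span ℝ s) :
    x ∈ Submodule.span ℝ≥0 (s ∪ -s) := by
  have hsymm : ∀ v ∈ s ∪ -s, -v ∈ s ∪ -s := by
    rintro v (hv | hv)
    · exact Or.inr (by simpa using hv)
    · exact Or.inl (by simpa using hv)
  induction hx using Submodule.span_induction with
  | mem v hv => exact Submodule.subset_span (Or.inl hv)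
  | zero => exact Submodule.zero_mem _
  | add a b _ _ ha hb => exact Submodule.add_mem _ ha hb
  | smul a v _ hv =>
    rcases le_or_gt 0 a with h | h
    · rw [← toNN_smul h]; exact Submodule.smul_mem _ _ hv
    · have : a • v = (-a) • (-v) := by rw [smul_neg, neg_smul, neg_neg]
      rw [this, ← toNN_smul (by linarith : (0:ℝ) ≤ -a)]
      exact Submodule.smul_mem _ _ (neg_mem_span_symm hsymm hv)

end Cone2

theorem part1 (n : ℕ) (C : Submodule ℝ≥0 (EE n))
    (hfg : ∃ G : Finset (EE n), C = Submodule.span ℝ≥0 (G : Set (EE n)))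
    (hpos : ∀ t : ℝ, 0 ≤ t → ((0, t) : EE n) ∈ C)
    (hneg : ∀ t : ℝ, t < 0 → ((0, t) : EE n) ∉ C)
    (hsub : ∀ φ : EE n →ₗ[ℝ] ℝ,
        (∀ x ∈ C, 0 ≤ φ x) → φ (0, -1) < 0 →
        ∀ L : Submodule ℝ (EE n), L ≠ ⊥ →
          (∀ x ∈ L, φ x = 0) → (∀ x ∈ L, x ∈ C) →
          (∀ x ∈ L, x ∈ Submodule.span ℝ≥0
            ((C : Set (EE n)) ∩ (L : Set (EE n)))) →
          False) :
    ∃ φ : EE n →ₗ[ℝ] ℝ,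
      (∀ x ∈ C, 0 ≤ φ x) ∧ φ (0, -1) < 0 ∧ ∀ x ∈ C, φ x = 0 → x = 0 := by
  classical
  obtain ⟨G, rfl⟩ := hfg
  set C := Submodule.span ℝ≥0 (G : Set (EE n)) with hC
  have hGC : ∀ g ∈ G, g ∈ C := fun g hg => Submodule.subset_span hg
  -- the separating functionals for generators whose negative is not in C
  have hchoice : ∀ g : EE n, ∃ ψ : EE n →ₗ[ℝ] ℝ,
      (-g ∉ C) → (∀ x ∈ C, 0 ≤ ψ x) ∧ 0 < ψ g := by
    intro g
    by_cases h : -g ∈ C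
    · exact ⟨0, fun h' => absurd h h'⟩
    · obtain ⟨ψ, hψ1, hψ2⟩ := cone_sep G (-g) h
      exact ⟨ψ, fun _ => ⟨hψ1, by simpa using hψ2⟩⟩
  choose ψ hψ using hchoice
  set Gp := G.filter (fun g => -g ∉ C) with hGp
  set Gm := G.filter (fun g => -g ∈ C) with hGm
  set Φ : EE n →ₗ[ℝ] ℝ := ∑ g ∈ Gp, ψ g with hΦ
  have hΦapp : ∀ x, Φ x = ∑ g ∈ Gp, ψ g x := fun x => by
    rw [hΦ, LinearMap.coe_sum, Finset.sum_apply]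
  have hψprop : ∀ g ∈ Gp, (∀ x ∈ C, 0 ≤ ψ g x) ∧ 0 < ψ g g := by
    intro g hg
    exact hψ g (by simpa [hGp] using (Finset.mem_filter.1 hg).2)
  have hΦC : ∀ x ∈ C, 0 ≤ Φ x := by
    intro x hx
    rw [hΦapp]
    exact Finset.sum_nonneg fun g hg => (hψprop g hg).1 x hx
  -- key claim: x ∈ C with Φ x = 0 lies in the span of Gm
  have claim1 : ∀ x ∈ C, Φ x = 0 → x ∈ Submodule.span ℝ≥0 ((Gm : Finset (EE n)) : Set (EE n)) := by
    intro x hx hΦx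
    obtain ⟨f, -, hf⟩ := Submodule.mem_span_finset.1 (by rwa [hC] at hx)
    -- each ψ h vanishes on x
    have hvan : ∀ h ∈ Gp, ψ h x = 0 := by
      intro h hh
      have := (Finset.sum_eq_zero_iff_of_nonneg
        (fun g hg => (hψprop g hg).1 x hx)).1 (by rw [← hΦapp]; exact hΦx)
      exact this h hh
    -- coefficients on Gp vanish
    have hcoef : ∀ h ∈ Gp, f h = 0 := by
      intro h hh
      have hhG : h ∈ G := (Finset.mem_filter.1 hh).1
      have hx' : ψ h x = ∑ g ∈ G, (f g : ℝ) * ψ h g := by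
        rw [← hf, map_sum]
        exact Finset.sum_congr rfl fun g _ => by
          rw [nnsmul_eq, map_smul, smul_eq_mul]
      have hterm0 : ∀ g ∈ G, 0 ≤ (f g : ℝ) * ψ h g :=
        fun g hg => mul_nonneg (f g).coe_nonneg ((hψprop h hh).1 g (hGC g hg))
      have hallzero := (Finset.sum_eq_zero_iff_of_nonneg hterm0).1
        (by rw [← hx']; exact hvan h hh)
      have := hallzero h hhG
      have hpos := (hψprop h hh).2
      have : (f h : ℝ) = 0 := by
        rcases mul_eq_zero.1 this with h' | h'
        · exact h'
        · exact absurd h' (ne_of_gt hpos)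
      exact_mod_cast this
    -- hence x is an ℝ≥0-combination of Gm
    have hsplit : x = ∑ g ∈ Gm, f g • g := by
      rw [← hf]
      have hunion : G = Gp ∪ Gm := by
        ext g
        simp only [hGp, hGm, Finset.mem_union, Finset.mem_filter]
        by_cases h : -g ∈ C <;> by_cases h' : g ∈ G <;> simp [h, h']
      rw [hunion, Finset.sum_union]
      · rw [Finset.sum_eq_zero fun g hg => by rw [hcoef g hg, zero_smul], zero_add]
      · rw [hGp, hGm]
        exact Finset.disjoint_filter_filter' _ _ (by
          intro p hp1 hp2
          exact fun g hg => absurd (hp2 g hg) (hp1 g hg))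
    rw [hsplit]
    exact Submodule.sum_mem _ fun g hg => Submodule.smul_mem _ _ (Submodule.subset_span hg)
  -- negatives of the span of Gm lie in C
  have hGmC : ∀ x ∈ Submodule.span ℝ≥0 ((Gm : Finset (EE n)) : Set (EE n)), -x ∈ C := by
    intro x hx
    induction hx using Submodule.span_induction with
    | mem v hv =>
      have : -v ∈ C := by
        have := (Finset.mem_filter.1 (by exact_mod_cast hv : v ∈ Gm)).2
        simpa [hGm] using this
      exact this
    | zero => rw [neg_zero]; exact Submodule.zero_mem _
    | add a b _ _ ha hb => rw [neg_add]; exact Submodule.add_mem _ ha hb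
    | smul a v _ hv => rw [← smul_neg]; exact Submodule.smul_mem _ _ hv
  have hGmsubC : ∀ g ∈ Gm, g ∈ C := fun g hg => hGC g (Finset.mem_filter.1 hg).1
  -- Φ (0, -1) < 0
  have h01 : ((0, -1) : EE n) = -((0, 1) : EE n) := by
    rw [Prod.ext_iff]; norm_num
  have hΦneg : Φ (0, -1) < 0 := by
    have h1C : ((0, 1) : EE n) ∈ C := hpos 1 zero_le_one
    have h1 : 0 ≤ Φ (0, 1) := hΦC _ h1C
    rcases lt_or_eq_of_le h1 with h | h
    · rw [h01, map_neg]; linarith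
    · exfalso
      have := claim1 _ h1C h.symm
      have := hGmC _ this
      rw [← h01] at this
      exact hneg (-1) (by norm_num) this
  by_cases hL : Submodule.span ℝ ((Gm : Finset (EE n)) : Set (EE n)) = ⊥
  · -- conclusion case
    refine ⟨Φ, hΦC, hΦneg, fun x hx hx0 => ?_⟩
    have hGm0 : ((Gm : Finset (EE n)) : Set (EE n)) ⊆ ((⊥ : Submodule ℝ≥0 (EE n)) : Set (EE n)) := by
      intro g hg
      have : g ∈ Submodule.span ℝ ((Gm : Finset (EE n)) : Set (EE n)) := Submodule.subset_span hg
      rw [hL] at this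
      simpa using this
    have := claim1 x hx hx0
    have := Submodule.span_le.2 hGm0 this
    simpa using this
  · -- contradiction case
    exfalso
    set L := Submodule.span ℝ ((Gm : Finset (EE n)) : Set (EE n)) with hLdef
    have hvan : ∀ x ∈ L, Φ x = 0 := by
      have hgen : ∀ g ∈ Gm, Φ g = 0 := by
        intro g hg
        have h1 : 0 ≤ Φ g := hΦC g (hGmsubC g hg)
        have h2 : 0 ≤ Φ (-g) := hΦC _ (by
          have := (Finset.mem_filter.1 hg).2
          simpa [hGm] using this)
        rw [map_neg] at h2
        linarith
      intro x hx
      induction hx using Submodule.span_induction with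
      | mem v hv => exact hgen v (by exact_mod_cast hv)
      | zero => exact map_zero Φ
      | add a b _ _ ha hb => rw [map_add, ha, hb, add_zero]
      | smul a v _ hv => rw [map_smul, hv, smul_zero]
    have hsymmsub : ((Gm : Finset (EE n)) : Set (EE n)) ∪ -((Gm : Finset (EE n)) : Set (EE n))
        ⊆ (C : Set (EE n)) ∩ (L : Set (EE n)) := by
      rintro v (hv | hv)
      · exact ⟨hGmsubC v (by exact_mod_cast hv), Submodule.subset_span hv⟩
      · rw [Set.mem_neg] at hv
        refine ⟨?_, ?_⟩
        · have := (Finset.mem_filter.1 (by exact_mod_cast hv : -v ∈ Gm)).2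
          simp only [hGm, neg_neg] at this
          simpa using this
        · have : -v ∈ L := Submodule.subset_span hv
          simpa using Submodule.neg_mem L this
    have hLC : ∀ x ∈ L, x ∈ C := by
      intro x hx
      have := real_span_subset hx
      have := Submodule.span_mono (hsymmsub.trans (Set.inter_subset_left)) this
      rwa [Submodule.span_eq] at this
    have hLspan : ∀ x ∈ L, x ∈ Submodule.span ℝ≥0
        ((C : Set (EE n)) ∩ (L : Set (EE n))) := by
      intro x hx
      exact Submodule.span_mono hsymmsub (real_span_subset hx)
    exact hsub Φ hΦC hΦneg L hL hvan hLC hLspan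

theorem part2 (n : ℕ) (R : Type) [Fintype R] (e : R → NZ n) (faces : Finset (Finset R))
    (hempty : ∅ ∈ faces)
    (hdown : ∀ S ∈ faces, ∀ T ⊆ S, T ∈ faces)
    (hsimp : ∀ S ∈ faces, LinearIndependent ℝ fun r : {r // r ∈ S} => lattMap n (e r))
    (hcomplete : ∀ x : NR n, ∃ S ∈ faces,
        x ∈ Submodule.span ℝ≥0 ((fun r => lattMap n (e r)) '' (S : Set R)))
    (f : NR n → ℝ)
    (hlin : ∀ S ∈ faces, ∃ lam : NR n →ₗ[ℝ] ℝ,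
        ∀ x ∈ Submodule.span ℝ≥0 ((fun r => lattMap n (e r)) '' (S : Set R)), f x = lam x)
    (hposw : ∀ c : R → ℚ, (∀ r, 0 ≤ c r) → (∑ r : R, c r • lattQMap n (e r)) = 0 →
        c ≠ 0 → 0 < ∑ r : R, (c r : ℝ) * f (lattMap n (e r))) :
    ∃ lam : NR n →ₗ[ℝ] ℝ, f 0 - lam 0 = 0 ∧
      ∀ (r : R) (t : ℝ), 0 < t →
        0 < f (t • lattMap n (e r)) - lam (t • lattMap n (e r)) := by
  classical
  set vr : R → NR n := fun r => lattMap n (e r) with hvr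
  set fr : R → ℝ := fun r => f (vr r) with hfr
  -- f vanishes at 0
  have hf0 : f 0 = 0 := by
    obtain ⟨lam0, hlam0⟩ := hlin ∅ hempty
    rw [hlam0 0 (Submodule.zero_mem _), map_zero]
  -- coordinates of lattMap
  have hlatt : ∀ (z : NZ n) (j : Fin n), lattMap n z j = (z j : ℝ) := by
    intro z j; simp [lattMap]
  have hlattQ : ∀ (z : NZ n) (j : Fin n), lattQMap n z j = (z j : ℚ) := by
    intro z j; simp [lattQMap]
  -- real positivity
  have posR : ∀ c : R → ℝ, (∀ r, 0 ≤ c r) → (∑ r, c r • vr r) = 0 → c ≠ 0 →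
      0 < ∑ r, c r * fr r := by
    apply posOnReal (fun r => lattQMap n (e r)) vr
    · intro r j
      rw [hvr]
      simp only [hlatt, hlattQ]
      push_cast
      rfl
    · exact hposw
  -- rays are nonzero
  have hv_ne : ∀ r, vr r ≠ 0 := by
    intro r h
    have he : e r = 0 := by
      funext j
      have := congrFun h j
      rw [hvr] at this
      simp only [hlatt] at this
      have : ((e r j : ℝ)) = 0 := this
      exact_mod_cast this
    have hc := hposw (Pi.single r 1)
      (fun r' => by by_cases h' : r' = r <;> simp [Pi.single, Function.update, h'])
      (by
        rw [Finset.sum_eq_single r]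
        · rw [he, map_zero, smul_zero]
        · intro r' _ hr'; rw [Pi.single_eq_of_ne hr', zero_smul]
        · intro h'; exact absurd (Finset.mem_univ r) h')
      (by
        intro h'
        have := congrFun h' r
        simp [Pi.single_eq_same] at this)
    rw [Finset.sum_eq_single r] at hc
    · rw [Pi.single_eq_same, show (lattMap n) (e r) = 0 from h, hf0] at hc
      norm_num at hc
    · intro r' _ hr'; rw [Pi.single_eq_of_ne hr']; norm_num
    · intro h'; exact absurd (Finset.mem_univ r) h'
  -- the cone over the graph of f
  set gv : Option R → EE n := fun o => Option.elim o ((0 : NR n), (1:ℝ)) (fun r => (vr r, fr r))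
    with hgv
  set C : Submodule ℝ≥0 (EE n) := Submodule.span ℝ≥0 (Set.range gv) with hCdef
  have hmemC : ∀ x ∈ C, ∃ a : Option R → ℝ≥0, (∑ o, a o • gv o) = x := by
    intro x hx
    exact (Submodule.mem_span_range_iff_exists_fun ℝ≥0).1 hx
  have hgvmem : ∀ o, gv o ∈ C := fun o => Submodule.subset_span ⟨o, rfl⟩
  -- sum components
  have hsum_comp : ∀ a : Option R → ℝ≥0,
      (∑ o, a o • gv o) = (∑ r, ((a (some r) : ℝ)) • vr r,
        (a none : ℝ) + ∑ r, (a (some r) : ℝ) * fr r) := by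
    intro a
    rw [Fintype.sum_option]
    have h1 : a none • gv none = ((0 : NR n), (a none : ℝ)) := by
      rw [hgv]
      show a none • ((0 : NR n), (1:ℝ)) = _
      rw [nnsmul_eq, Prod.smul_mk, smul_zero, smul_eq_mul, mul_one]
    have h2 : ∀ r, a (some r) • gv (some r)
        = ((a (some r) : ℝ) • vr r, (a (some r) : ℝ) * fr r) := by
      intro r
      rw [hgv]
      show a (some r) • (vr r, fr r) = _
      rw [nnsmul_eq, Prod.smul_mk, smul_eq_mul]
    rw [h1, Finset.sum_congr rfl fun r _ => h2 r]
    have h3 : (∑ r, ((( a (some r) : ℝ)) • vr r, (a (some r) : ℝ) * fr r))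
        = ((∑ r, ((a (some r) : ℝ)) • vr r : NR n), (∑ r, (a (some r) : ℝ) * fr r : ℝ)) := by
      rw [Prod.ext_iff]
      constructor
      · rw [Prod.fst_sum]
      · rw [Prod.snd_sum]
    rw [h3, Prod.mk_add_mk, zero_add]
  -- C hypotheses for part1
  have hCfg : ∃ G : Finset (EE n), C = Submodule.span ℝ≥0 (G : Set (EE n)) := by
    refine ⟨Finset.univ.image gv, ?_⟩
    rw [Finset.coe_image, Finset.coe_univ, Set.image_univ, hCdef]
  have hCpos : ∀ t : ℝ, 0 ≤ t → ((0, t) : EE n) ∈ C := by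
    intro t ht
    have : ((0, t) : EE n) = t • gv none := by
      rw [hgv]
      show _ = t • ((0 : NR n), (1:ℝ))
      rw [Prod.smul_mk, smul_zero, smul_eq_mul, mul_one]
    rw [this, ← toNN_smul ht]
    exact Submodule.smul_mem _ _ (hgvmem none)
  have hCneg : ∀ t : ℝ, t < 0 → ((0, t) : EE n) ∉ C := by
    intro t ht hmem
    obtain ⟨a, ha⟩ := hmemC _ hmem
    rw [hsum_comp a, Prod.ext_iff] at ha
    obtain ⟨ha1, ha2⟩ := ha
    simp only at ha1 ha2
    set c : R → ℝ := fun r => (a (some r) : ℝ) with hc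
    by_cases hc0 : c = 0
    · rw [Finset.sum_eq_zero (fun r _ => by
        rw [show (a (some r) : ℝ) = c r from rfl, hc0]; simp), add_zero] at ha2
      have := (a none).coe_nonneg
      rw [ha2] at this
      linarith
    · have := posR c (fun r => (a (some r)).coe_nonneg) ha1 hc0
      have h4 := (a none).coe_nonneg
      rw [← ha2] at ht
      have : (0:ℝ) < ∑ r, (a (some r) : ℝ) * fr r := this
      linarith
  have hCsub : ∀ φ : EE n →ₗ[ℝ] ℝ,
      (∀ x ∈ C, 0 ≤ φ x) → φ (0, -1) < 0 →
      ∀ L : Submodule ℝ (EE n), L ≠ ⊥ →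
        (∀ x ∈ L, φ x = 0) → (∀ x ∈ L, x ∈ C) →
        (∀ x ∈ L, x ∈ Submodule.span ℝ≥0
          ((C : Set (EE n)) ∩ (L : Set (EE n)))) →
        False := by
    intro φ hφ hφneg L hLne hLker hLC hLspan
    obtain ⟨x, hxL, hxne⟩ := Submodule.exists_mem_ne_zero_of_ne_bot hLne
    obtain ⟨a, haeq⟩ := hmemC x (hLC x hxL)
    obtain ⟨b, hbeq⟩ := hmemC (-x) (hLC (-x) (Submodule.neg_mem L hxL))
    have hs : (∑ o, (a + b) o • gv o) = 0 := by
      rw [Finset.sum_congr rfl fun o (_ : o ∈ Finset.univ) =>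
          (by rw [Pi.add_apply, add_smul] : (a + b) o • gv o = a o • gv o + b o • gv o),
        Finset.sum_add_distrib, haeq, hbeq, add_neg_cancel]
    rw [hsum_comp (a + b), Prod.ext_iff] at hs
    obtain ⟨hs1, hs2⟩ := hs
    simp only [Prod.fst_zero, Prod.snd_zero] at hs1 hs2
    set c : R → ℝ := fun r => (((a + b) (some r) : ℝ≥0) : ℝ) with hc
    have hcnn : ∀ r, 0 ≤ c r := fun r => ((a + b) (some r)).coe_nonneg
    by_cases hc0 : c = 0
    · -- then x = 0, contradiction
      apply hxne
      have hab : ∀ o, a o = 0 := by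
        intro o
        cases o with
        | some r =>
          have h1 : (((a + b) (some r) : ℝ≥0) : ℝ) = 0 := by
            rw [show (((a + b) (some r) : ℝ≥0) : ℝ) = c r from rfl, hc0]; rfl
          have h2 : (a + b) (some r) = 0 := by exact_mod_cast h1
          exact (add_eq_zero.1 h2).1
        | none =>
          have hsum0 : (∑ r, c r * fr r) = 0 :=
            Finset.sum_eq_zero fun r _ => by
              rw [show c r = 0 from by rw [hc0]; rfl, zero_mul]
          have h2 : (((a + b) none : ℝ≥0) : ℝ) = 0 := by
            have : (((a + b) none : ℝ≥0) : ℝ) + ∑ r, c r * fr r = 0 := hs2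
            rw [hsum0, add_zero] at this
            exact this
          have h3 : (a + b) none = 0 := by exact_mod_cast h2
          exact (add_eq_zero.1 h3).1
      rw [← haeq]
      exact Finset.sum_eq_zero fun o _ => by rw [hab o, zero_smul]
    · have hpos' := posR c hcnn hs1 hc0
      have h4 := ((a + b) none).coe_nonneg
      have h5 : (((a + b) none : ℝ≥0) : ℝ) + ∑ r, c r * fr r = 0 := hs2
      linarith
  obtain ⟨φ, hφC, hφneg, hφinj⟩ := part1 n C hCfg hCpos hCneg hCsub
  -- split φ
  set a0 : ℝ := φ (0, 1) with ha0def
  have h01 : ((0, -1) : EE n) = -((0, 1) : EE n) := by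
    rw [Prod.ext_iff]; norm_num
  have ha0 : 0 < a0 := by
    rw [h01, map_neg] at hφneg
    linarith
  set ψ : NR n →ₗ[ℝ] ℝ := φ.comp (LinearMap.inl ℝ (NR n) ℝ) with hψdef
  set lam : NR n →ₗ[ℝ] ℝ := (-a0⁻¹) • ψ with hlamdef
  have hφsplit : ∀ (x : NR n) (s : ℝ), φ (x, s) = ψ x + s * a0 := by
    intro x s
    have hxs : ((x, s) : EE n) = (x, 0) + s • ((0 : NR n), (1:ℝ)) := by
      rw [Prod.smul_mk, Prod.mk_add_mk, smul_zero, smul_eq_mul, mul_one, add_zero, zero_add]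
    rw [hxs, map_add, map_smul, smul_eq_mul]
    rfl
  have hlamapp : ∀ x, lam x = -a0⁻¹ * ψ x := by
    intro x
    rw [hlamdef, LinearMap.smul_apply, smul_eq_mul]
  -- strict positivity at the rays
  have key : ∀ r, 0 < fr r - lam (vr r) := by
    intro r
    have hmem : (vr r, fr r) ∈ C := hgvmem (some r)
    have h1 : 0 ≤ ψ (vr r) + fr r * a0 := by
      rw [← hφsplit]
      exact hφC _ hmem
    have h2 : ψ (vr r) + fr r * a0 ≠ 0 := by
      intro h
      have := hφinj _ hmem (by rw [hφsplit]; exact h)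
      exact hv_ne r (congrArg Prod.fst this)
    have h3 : 0 < ψ (vr r) + fr r * a0 := lt_of_le_of_ne h1 (Ne.symm h2)
    have h4 : fr r - lam (vr r) = a0⁻¹ * (ψ (vr r) + fr r * a0) := by
      rw [hlamapp]
      field_simp
      ring
    rw [h4]
    exact mul_pos (inv_pos.2 ha0) h3
  refine ⟨lam, by rw [hf0, map_zero, sub_zero], ?_⟩
  intro r t ht
  obtain ⟨S, hS, hxS⟩ := hcomplete (vr r)
  obtain ⟨lamS, hlamS⟩ := hlin S hS
  have htv : t • vr r ∈ Submodule.span ℝ≥0 (vr '' (S : Set R)) := by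
    rw [← toNN_smul ht.le]
    exact Submodule.smul_mem _ _ hxS
  have hftv : f (t • vr r) = t * fr r := by
    rw [hlamS _ htv, map_smul, smul_eq_mul, ← hlamS _ hxS]
  have hltv : lam (t • vr r) = t * lam (vr r) := by
    rw [map_smul, smul_eq_mul]
  rw [hftv, hltv]
  have := mul_pos ht (key r)
  linarith

/-- First conjunct: let `C` be a (closed convex) cone in `ℝⁿ × ℝ`,
positively generated by finitely many rays, containing the origin and `{0} × ℝ₊`.
If `C` contains no point of `{0} × ℝ_{<0}`, and no supporting hyperplane of `C` at `0`
separating `{0} × ℝ_{<0}` from `C` contains a nonzero linear subspace positively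
generated by rays of `C`, then there is a supporting hyperplane `H = ker φ` of `C`
at `0` with `H ∩ C = {0}`, separating `{0} × ℝ_{<0}` from `C`.
Second conjunct: for a complete simplicial rational fan `Σ` in `ℝⁿ` (rays `e r`,
cones the sets in `faces`) and a conewise linear `f : Σ → ℝ`, if the pairing of `f`
with every nonzero effective one-dimensional Minkowski weight is positive
(`∑ c_ρ f(e_ρ) > 0` whenever `c ≥ 0`, `c ≠ 0`, `∑ c_ρ e_ρ = 0` with `c` rational),
then `f` is strictly convex at the zero cone: there is a linear `λ` with `f - λ`
vanishing at `0` and strictly positive on the rays minus the origin. -/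
theorem kleiman_positivity (n : ℕ) :
    (∀ C : Submodule ℝ≥0 ((Fin n → ℝ) × ℝ),
      (∃ G : Finset ((Fin n → ℝ) × ℝ), C = Submodule.span ℝ≥0 (G : Set ((Fin n → ℝ) × ℝ))) →
      (∀ t : ℝ, 0 ≤ t → ((0, t) : (Fin n → ℝ) × ℝ) ∈ C) →
      (∀ t : ℝ, t < 0 → ((0, t) : (Fin n → ℝ) × ℝ) ∉ C) →
      (∀ φ : ((Fin n → ℝ) × ℝ) →ₗ[ℝ] ℝ,
        (∀ x ∈ C, 0 ≤ φ x) → φ (0, -1) < 0 →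
        ∀ L : Submodule ℝ ((Fin n → ℝ) × ℝ), L ≠ ⊥ →
          (∀ x ∈ L, φ x = 0) → (∀ x ∈ L, x ∈ C) →
          (∀ x ∈ L, x ∈ Submodule.span ℝ≥0
            ((C : Set ((Fin n → ℝ) × ℝ)) ∩ (L : Set ((Fin n → ℝ) × ℝ)))) →
          False) →
      ∃ φ : ((Fin n → ℝ) × ℝ) →ₗ[ℝ] ℝ,
        (∀ x ∈ C, 0 ≤ φ x) ∧ φ (0, -1) < 0 ∧ ∀ x ∈ C, φ x = 0 → x = 0) ∧
    (∀ (R : Type) (_ : Fintype R) (e : R → NZ n) (faces : Finset (Finset R)),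
      ∅ ∈ faces →
      (∀ S ∈ faces, ∀ T ⊆ S, T ∈ faces) →
      -- simpliciality: the generators of each cone are linearly independent
      (∀ S ∈ faces, LinearIndependent ℝ fun r : {r // r ∈ S} => lattMap n (e r)) →
      -- completeness: the cones cover `ℝⁿ`
      (∀ x : NR n, ∃ S ∈ faces,
        x ∈ Submodule.span ℝ≥0 ((fun r => lattMap n (e r)) '' (S : Set R))) →
      ∀ f : NR n → ℝ,
        -- `f` is conewise linear
        (∀ S ∈ faces, ∃ lam : NR n →ₗ[ℝ] ℝ,
          ∀ x ∈ Submodule.span ℝ≥0 ((fun r => lattMap n (e r)) '' (S : Set R)),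
            f x = lam x) →
        -- positivity against every nonzero effective one-dimensional Minkowski weight
        (∀ c : R → ℚ, (∀ r, 0 ≤ c r) → (∑ r : R, c r • lattQMap n (e r)) = 0 →
          c ≠ 0 → 0 < ∑ r : R, (c r : ℝ) * f (lattMap n (e r))) →
        -- conclusion: strict convexity at the zero cone
        ∃ lam : NR n →ₗ[ℝ] ℝ, f 0 - lam 0 = 0 ∧
          ∀ (r : R) (t : ℝ), 0 < t →
            0 < f (t • lattMap n (e r)) - lam (t • lattMap n (e r))) := by
  constructor
  · exact fun C => part1 n C
  · intro R inst e faces h1 h2 h3 h4 f h5 h6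
    exact part2 n R e faces h1 h2 h3 h4 f h5 h6
end Decomp
end

section
/- Let N = ℤe₁ + (1/3)ℤ(e₁ − e₂) ⊂ ℝ², e₀ = −e₁ − e₂, and let Δ be the one-dimensional fan with rays ρ_i = ℝ_{≥0} e_i for i ∈ {0,1,2}, with lattice N. Then Δ is unimodular with respect to N, and its degree-one Chow group A¹(Δ) = (⊕_i ℤ x_{ρ_i}) / ⟨Σ_i m(e_i) x_{ρ_i} : m ∈ N^*⟩ has nontrivial 3-torsion: the element x_{ρ₁} − x_{ρ₂} is nonzero in A¹(Δ) but 3(x_{ρ₁} − x_{ρ₂}) = 0. -/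
namespace TorsionExample

/-- The standard basis vector `e₁` of `ℝ²`. -/
noncomputable def v₁ : Fin 2 → ℝ := ![1, 0]

/-- The vector `(1/3)(e₁ - e₂)` of `ℝ²`. -/
noncomputable def v₂ : Fin 2 → ℝ := ![1/3, -1/3]

/-- The lattice `N = ℤe₁ + (1/3)ℤ(e₁ - e₂) ⊂ ℝ²`. -/
noncomputable def N : Submodule ℤ (Fin 2 → ℝ) := Submodule.span ℤ {v₁, v₂}

lemma v₁_mem : v₁ ∈ N := Submodule.subset_span (by simp)

lemma v₂_mem : v₂ ∈ N := Submodule.subset_span (by simp)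

lemma e₂_mem : ![0, (1 : ℝ)] ∈ N := by
  have h : ![0, (1 : ℝ)] = v₁ + (-3 : ℤ) • v₂ := by
    funext i; fin_cases i <;> simp [v₁, v₂] <;> norm_num
  rw [h]; exact N.add_mem v₁_mem (N.smul_mem _ v₂_mem)

lemma e₀_mem : ![(-1 : ℝ), -1] ∈ N := by
  have h : ![(-1 : ℝ), -1] = (-2 : ℤ) • v₁ + (3 : ℤ) • v₂ := by
    funext i; fin_cases i <;> simp [v₁, v₂] <;> norm_num
  rw [h]; exact N.add_mem (N.smul_mem _ v₁_mem) (N.smul_mem _ v₂_mem)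

/-- The ray generators `e₀ = -e₁ - e₂`, `e₁`, `e₂`, as elements of `N`. -/
noncomputable def E : Fin 3 → ↥N
  | 0 => ⟨![-1, -1], e₀_mem⟩
  | 1 => ⟨![1, 0], v₁_mem⟩
  | 2 => ⟨![0, 1], e₂_mem⟩

/-- The relations `∑ᵢ m(eᵢ) x_{ρᵢ} = 0`, `m ∈ M = Hom(N, ℤ)`, defining `A¹(Δ)`
(for this one-dimensional fan, the ideal `I` is trivial in degree one). -/
noncomputable def Jrel : Submodule ℤ (Fin 3 → ℤ) :=
  Submodule.span ℤ {z | ∃ m : Module.Dual ℤ ↥N, z = fun i => m (E i)}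

/-- The degree-one Chow group `A¹(Δ) = (⊕ᵢ ℤ x_{ρᵢ}) / ⟨∑ᵢ m(eᵢ) x_{ρᵢ} : m ∈ N^*⟩`. -/
noncomputable abbrev A1 := (Fin 3 → ℤ) ⧸ Jrel

end TorsionExample

/-
In the basis `v₁, v₂` of `N` the ray generators `e₀, e₁, e₂` have coordinates `(-2, 3)`, `(1, 0)`,
`(1, -3)`. Each of them has a coordinate functional (`a + b`, `a`, `a`) taking the value `1` on it,
which makes it primitive. Since `e₁ - e₂ = 3 v₂`, every relation `(m(eᵢ))ᵢ` satisfies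
`m(e₁) ≡ m(e₂) mod 3`, which fails for `x_{ρ₁} - x_{ρ₂}`; and the functional `3a + 2b` takes the
values `(0, 3, -3)` on the `eᵢ`, so `3 (x_{ρ₁} - x_{ρ₂})` is a relation.
-/

theorem isUnit_of_smul_eq_of_dual_apply_eq_one {R M : Type*} [CommSemiring R] [AddCommMonoid M]
    [Module R M] {φ : Module.Dual R M} {v w : M} (hφ : φ v = 1) {m : R} (h : m • w = v) :
    IsUnit m :=
  IsUnit.of_mul_eq_one (φ w) (by rw [← smul_eq_mul, ← map_smul, h, hφ])

namespace TorsionExample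

lemma linearIndependent_v₁_v₂ : LinearIndependent ℤ ![v₁, v₂] := by
  rw [LinearIndependent.pair_iff]
  intro s t h
  have h0 := congrFun h 0
  have h1 := congrFun h 1
  simp [v₁, v₂] at h0 h1
  subst h1
  simpa using h0

noncomputable def basisN : Module.Basis (Fin 2) ℤ N :=
  (Module.Basis.span linearIndependent_v₁_v₂).map
    (LinearEquiv.ofEq _ _ (by rw [N, Matrix.range_cons_cons_empty]))

lemma coe_basisN (k : Fin 2) : (basisN k : Fin 2 → ℝ) = ![v₁, v₂] k := by
  simp [basisN]

def coordsE : Fin 3 → Fin 2 → ℤ := ![![-2, 3], ![1, 0], ![1, -3]]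

lemma basisN_equivFun_E (i : Fin 3) : basisN.equivFun (E i) = coordsE i := by
  rw [← LinearEquiv.eq_symm_apply, Module.Basis.equivFun_symm_apply]
  ext k
  simp only [Fin.sum_univ_two, Submodule.coe_add, Submodule.coe_smul, coe_basisN]
  fin_cases i <;> fin_cases k <;> simp [E, v₁, v₂, coordsE] <;> norm_num

@[simp]
lemma basisN_repr_E (i : Fin 3) (k : Fin 2) : basisN.repr (E i) k = coordsE i k := by
  rw [← Module.Basis.equivFun_apply, basisN_equivFun_E]

lemma injective_E : Function.Injective E := by
  have hcomp : basisN.equivFun ∘ E = coordsE := funext basisN_equivFun_E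
  have hcoords : Function.Injective coordsE := by decide
  exact Function.Injective.of_comp (f := basisN.equivFun) (hcomp ▸ hcoords)

lemma exists_dual_apply_E_eq_one (i : Fin 3) : ∃ φ : Module.Dual ℤ N, φ (E i) = 1 := by
  fin_cases i
  · exact ⟨basisN.coord 0 + basisN.coord 1, by simp [coordsE]⟩
  · exact ⟨basisN.coord 0, by simp [coordsE]⟩
  · exact ⟨basisN.coord 0, by simp [coordsE]⟩

lemma E_one_sub_E_two : E 1 - E 2 = (3 : ℤ) • basisN 1 :=
  basisN.repr.injective (by ext k; fin_cases k <;> simp [coordsE])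

def diffModThree : (Fin 3 → ℤ) →ₗ[ℤ] ZMod 3 :=
  (Int.castAddHom (ZMod 3)).toIntLinearMap ∘ₗ
    (LinearMap.proj (R := ℤ) (φ := fun _ : Fin 3 => ℤ) 1 - LinearMap.proj 2)

lemma Jrel_le_ker_diffModThree : Jrel ≤ LinearMap.ker diffModThree := by
  rw [Jrel, Submodule.span_le]
  rintro _ ⟨m, rfl⟩
  have h : m (E 1) - m (E 2) = 3 * m (basisN 1) := by
    rw [← map_sub, E_one_sub_E_two, map_smul, smul_eq_mul]
  exact (ZMod.intCast_zmod_eq_zero_iff_dvd _ 3).mpr (Dvd.intro _ h.symm)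

lemma diffModThree_single_sub_single : diffModThree (Pi.single 1 1 - Pi.single 2 1) ≠ 0 := by
  simp [diffModThree]
  decide

lemma three_smul_single_sub_single_mem_Jrel :
    (3 : ℤ) • (Pi.single 1 1 - Pi.single 2 1 : Fin 3 → ℤ) ∈ Jrel :=
  Submodule.subset_span ⟨(3 : ℤ) • basisN.coord 0 + (2 : ℤ) • basisN.coord 1, by
    ext i; fin_cases i <;> simp [coordsE]⟩

end TorsionExample

open TorsionExample

/-- the one-dimensional fan `Δ` in `ℝ²`, with rays `ρᵢ = ℝ_{≥0} eᵢ`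
(`e₀ = -e₁ - e₂`) and lattice `N = ℤe₁ + (1/3)ℤ(e₁ - e₂)`, is unimodular with
respect to `N` (each `eᵢ` is primitive in `N`, the rays being distinct cones); and
its degree-one Chow group `A¹(Δ)` has nontrivial `3`-torsion: `x_{ρ₁} - x_{ρ₂}`
is nonzero in `A¹(Δ)` while `3 (x_{ρ₁} - x_{ρ₂}) = 0`. -/
theorem chow_three_torsion :
    -- unimodularity: each ray generator is primitive in the lattice `N`
    (∀ (i : Fin 3) (m : ℤ) (w : ↥N), m • w = E i → IsUnit m) ∧
    -- the rays are distinct (so the degree-one part of the ideal `I` is trivial)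
    (Function.Injective E) ∧
    Jrel.mkQ (Pi.single 1 1 - Pi.single 2 1) ≠ 0 ∧
    (3 : ℤ) • Jrel.mkQ (Pi.single 1 1 - Pi.single 2 1) = 0 := by
  refine ⟨fun i m w h => ?_, injective_E, ?_, ?_⟩
  · obtain ⟨φ, hφ⟩ := exists_dual_apply_E_eq_one i
    exact isUnit_of_smul_eq_of_dual_apply_eq_one hφ h
  · rw [Submodule.mkQ_apply, Ne, Submodule.Quotient.mk_eq_zero]
    exact fun h => diffModThree_single_sub_single (Jrel_le_ker_diffModThree h)
  · rw [← map_smul, Submodule.mkQ_apply, Submodule.Quotient.mk_eq_zero]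
    exact three_smul_single_sub_single_mem_Jrel
end
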